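/- arXiv:2409.07636 — 8 statements merged into one kernel-verified Lean document; each statement's English description precedes it below -/
import Mathlib

section
/- Let p/q be a reduced fraction with 0 < p/q < 1 and q ≥ 2, and let x = (x_i)_{i≥1} be an infinite binary sequence containing both the factor 01 and the factor 10. Let y be the infinite binary sequence obtained from x by replacing every entry 0 by the q-digit word W^{01}_{p/q} and every entry 1 by the q-digit word W^{10}_{p/q}. Then y is not Sturmian: y contains two factors of equal length whose numbers of 1's differ by at least 2. -/
/-!
Since `q · (p/q) = p` is an integer, the mechanical words telescope: the last letter of
`W^{01}_{p/q}` is `⌈p/q⌉ = 1` and that of `W^{10}_{p/q}` is `⌊p/q⌋ = 0`, while their first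
`q - 1` letters contain `p - 1` and `p` ones respectively. The length-`q` window straddling the
junction of the blocks substituted for a factor `01` of `x` therefore contains `p + 1` ones,
and the one straddling a factor `10` contains `p - 1`.
-/

/-- The 01-mechanical digit sequence of `r`: `α_j(r) = ⌈(j+1)r⌉ - ⌈jr⌉`. -/
noncomputable def alpha01 (r : ℚ) (j : ℕ) : ℤ := ⌈((j : ℚ) + 1) * r⌉ - ⌈(j : ℚ) * r⌉

/-- The 10-mechanical digit sequence of `r`: `β_j(r) = ⌊(j+1)r⌋ - ⌊jr⌋`. -/
noncomputable def beta10 (r : ℚ) (j : ℕ) : ℤ := ⌊((j : ℚ) + 1) * r⌋ - ⌊(j : ℚ) * r⌋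

/-- The 01-word of `r` of length `q`: `(α_1(r), …, α_q(r))`. -/
noncomputable def word01 (r : ℚ) (q : ℕ) : List ℤ := (List.range q).map fun i => alpha01 r (i + 1)

/-- The 10-word of `r` of length `q`: `(β_1(r), …, β_q(r))`. -/
noncomputable def word10 (r : ℚ) (q : ℕ) : List ℤ := (List.range q).map fun i => beta10 r (i + 1)

open Finset

lemma word01_getD {r : ℚ} {q t : ℕ} (h : t < q) : (word01 r q).getD t 0 = alpha01 r (t + 1) := by
  simp [word01, h]

lemma word10_getD {r : ℚ} {q t : ℕ} (h : t < q) : (word10 r q).getD t 0 = beta10 r (t + 1) := by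
  simp [word10, h]

lemma sum_range_alpha01 (r : ℚ) (n : ℕ) :
    ∑ t ∈ range n, alpha01 r (t + 1) = ⌈((n : ℚ) + 1) * r⌉ - ⌈r⌉ := by
  simpa [alpha01, add_assoc, one_add_one_eq_two] using
    sum_range_sub (fun t : ℕ => ⌈((t : ℚ) + 1) * r⌉) n

lemma sum_range_beta10 (r : ℚ) (n : ℕ) :
    ∑ t ∈ range n, beta10 r (t + 1) = ⌊((n : ℚ) + 1) * r⌋ - ⌊r⌋ := by
  simpa [beta10, add_assoc, one_add_one_eq_two] using
    sum_range_sub (fun t : ℕ => ⌊((t : ℚ) + 1) * r⌋) n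

section

variable {r : ℚ} {q : ℕ} {m : ℤ}

lemma alpha01_of_mul_eq_intCast (hqr : (q : ℚ) * r = m) : alpha01 r q = ⌈r⌉ := by
  rw [alpha01, add_mul, one_mul, hqr, Int.ceil_intCast, add_comm, Int.ceil_add_intCast]
  ring

lemma beta10_of_mul_eq_intCast (hqr : (q : ℚ) * r = m) : beta10 r q = ⌊r⌋ := by
  rw [beta10, add_mul, one_mul, hqr, Int.floor_intCast, add_comm, Int.floor_add_intCast]
  ring

lemma word01_getD_pred (hq : 0 < q) (hqr : (q : ℚ) * r = m) (hr0 : 0 < r) (hr1 : r ≤ 1) :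
    (word01 r q).getD (q - 1) 0 = 1 := by
  rw [word01_getD (by omega), Nat.sub_add_cancel hq, alpha01_of_mul_eq_intCast hqr,
    Int.ceil_eq_iff]
  constructor <;> push_cast <;> linarith

lemma word10_getD_pred (hq : 0 < q) (hqr : (q : ℚ) * r = m) (hr0 : 0 ≤ r) (hr1 : r < 1) :
    (word10 r q).getD (q - 1) 0 = 0 := by
  rw [word10_getD (by omega), Nat.sub_add_cancel hq, beta10_of_mul_eq_intCast hqr,
    Int.floor_eq_zero_iff]
  exact ⟨hr0, hr1⟩

lemma sum_word01_getD (hq : 0 < q) (hqr : (q : ℚ) * r = m) (hr0 : 0 < r) (hr1 : r ≤ 1) :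
    ∑ t ∈ range (q - 1), (word01 r q).getD t 0 = m - 1 := by
  have hceil : ⌈r⌉ = 1 := by
    rw [Int.ceil_eq_iff]
    constructor <;> push_cast <;> linarith
  rw [sum_congr rfl fun t ht => word01_getD (by simp at ht; omega), sum_range_alpha01,
    Nat.cast_pred hq, sub_add_cancel, hqr, Int.ceil_intCast, hceil]

lemma sum_word10_getD (hq : 0 < q) (hqr : (q : ℚ) * r = m) (hr0 : 0 ≤ r) (hr1 : r < 1) :
    ∑ t ∈ range (q - 1), (word10 r q).getD t 0 = m := by
  rw [sum_congr rfl fun t ht => word10_getD (by simp at ht; omega), sum_range_beta10,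
    Nat.cast_pred hq, sub_add_cancel, hqr, Int.floor_intCast,
    Int.floor_eq_zero_iff.mpr ⟨hr0, hr1⟩, sub_zero]

end

lemma sum_range_window_of_blocks {q : ℕ} (hq : 0 < q) {y : ℕ → ℤ} (w : ℕ → ℕ → ℤ)
    (hy : ∀ k, y k = w (k / q) (k % q)) (c : ℕ) :
    ∑ t ∈ range q, y (q * c + (q - 1) + t) = w c (q - 1) + ∑ t ∈ range (q - 1), w (c + 1) t := by
  have hblock : ∀ c t, t < q → y (q * c + t) = w c t := fun c t ht => by
    rw [hy, Nat.mul_add_div hq, Nat.div_eq_of_lt ht, add_zero, Nat.mul_add_mod, Nat.mod_eq_of_lt ht]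
  obtain ⟨n, rfl⟩ : ∃ n, q = n + 1 := ⟨q - 1, by omega⟩
  rw [Nat.add_sub_cancel, sum_range_succ', add_zero, hblock c n (by omega), add_comm]
  congr 1
  refine sum_congr rfl fun t ht => ?_
  rw [show (n + 1) * c + n + (t + 1) = (n + 1) * (c + 1) + t by ring,
    hblock _ _ (by simp at ht; omega)]

theorem substitution_not_sturmian_general
    (p q : ℕ) (hp : 0 < p) (hpq : p < q)
    (x : ℕ → ℤ)
    (h01 : ∃ i, x i = 0 ∧ x (i + 1) = 1)
    (h10 : ∃ i, x i = 1 ∧ x (i + 1) = 0)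
    (y : ℕ → ℤ)
    (hy : ∀ k : ℕ, y k =
      (if x (k / q) = 0 then word01 ((p : ℚ) / q) q else word10 ((p : ℚ) / q) q).getD (k % q) 0) :
    ∃ i j n : ℕ,
      2 ≤ |(∑ t ∈ Finset.range n, y (i + t)) - ∑ t ∈ Finset.range n, y (j + t)| := by
  obtain ⟨a, ha0, ha1⟩ := h01
  obtain ⟨b, hb1, hb0⟩ := h10
  have hq : 0 < q := hp.trans hpq
  have hqr : (q : ℚ) * (p / q) = (p : ℤ) := by push_cast; field_simp
  have hr0 : 0 < (p : ℚ) / q := by positivity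
  have hr1 : (p : ℚ) / q < 1 := (div_lt_one (by positivity)).mpr (by exact_mod_cast hpq)
  refine ⟨q * a + (q - 1), q * b + (q - 1), q, ?_⟩
  let w : ℕ → ℕ → ℤ := fun c t =>
    (if x c = 0 then word01 ((p : ℚ) / q) q else word10 ((p : ℚ) / q) q).getD t 0
  rw [sum_range_window_of_blocks hq w hy a, sum_range_window_of_blocks hq w hy b]
  simp only [w, ha0, ha1, hb0, hb1, if_true, one_ne_zero, if_false]
  rw [word01_getD_pred hq hqr hr0 hr1.le, sum_word10_getD hq hqr hr0.le hr1,
    word10_getD_pred hq hqr hr0.le hr1, sum_word01_getD hq hqr hr0 hr1.le]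
  ring_nf
  norm_num

/-- Substituting the 01- and 10-words of a reduced fraction `p/q`
(`0 < p/q < 1`, `q ≥ 2`) for the entries `0`, `1` of a binary sequence containing
both factors `01` and `10` yields a non-Sturmian sequence: it has two factors of
equal length whose numbers of `1`'s differ by at least `2`. -/
theorem substitution_not_sturmian
    (p q : ℕ) (hp : 0 < p) (hpq : p < q) (hq : 2 ≤ q) (hcop : Nat.Coprime p q)
    (x : ℕ → ℤ) (hx01 : ∀ i, x i = 0 ∨ x i = 1)
    (h01 : ∃ i, x i = 0 ∧ x (i + 1) = 1)
    (h10 : ∃ i, x i = 1 ∧ x (i + 1) = 0)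
    (y : ℕ → ℤ)
    (hy : ∀ k : ℕ, y k =
      (if x (k / q) = 0 then word01 ((p : ℚ) / q) q else word10 ((p : ℚ) / q) q).getD (k % q) 0) :
    ∃ i j n : ℕ,
      2 ≤ |(∑ t ∈ Finset.range n, y (i + t)) - ∑ t ∈ Finset.range n, y (j + t)| :=
  substitution_not_sturmian_general p q hp hpq x h01 h10 y hy
end

section
/- Let a/b and c/d be Farey neighbors with 0 < a/b < c/d ≤ 1 and let p/q = (a+c)/(b+d) be their mediant. Then W^{01}_{p/q} is the concatenation W^{01}_{c/d} · W^{01}_{a/b}; that is, α_j(p/q) = α_j(c/d) for 1 ≤ j ≤ d and α_{d+j}(p/q) = α_j(a/b) for 1 ≤ j ≤ b. Analogously, if 0 ≤ a/b < c/d < 1, then W^{10}_{p/q} is the concatenation W^{10}_{a/b} · W^{10}_{c/d}. -/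
lemma med_ceil_left (a b c d : ℕ) (hb2 : 2 ≤ b) (hd : 0 < d)
    (hF : b * c = a * d + 1) (j : ℕ) (hj : j ≤ d + 1) :
    ⌈(j : ℚ) * (((a:ℚ) + c) / ((b:ℚ) + d))⌉ = ⌈(j : ℚ) * ((c:ℚ) / d)⌉ := by
  have hd0 : (0:ℚ) < d := by exact_mod_cast hd
  have hq0 : (0:ℚ) < (b:ℚ) + d := by positivity
  have hFq : (b:ℚ) * c = (a:ℚ) * d + 1 := by exact_mod_cast hF
  rw [mul_div_assoc', mul_div_assoc']
  set C := ⌈(j:ℚ) * c / d⌉ with hC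
  have h1 : (j:ℚ) * c ≤ (d:ℚ) * C := by
    have h := Int.le_ceil ((j:ℚ) * c / d)
    rw [div_le_iff₀ hd0] at h
    linarith
  have h2i : (d:ℤ) * C ≤ (j:ℤ) * c + d - 1 := by
    have h := Int.ceil_lt_add_one ((j:ℚ) * c / d)
    have h'' : (C:ℚ) - 1 < (j:ℚ) * c / d := by linarith
    rw [lt_div_iff₀ hd0] at h''
    have h' : (d:ℚ) * C < (j:ℚ) * c + d := by linarith
    have : (d:ℤ) * C < (j:ℤ) * c + d := by exact_mod_cast h'
    linarith
  have h2 : (d:ℚ) * C ≤ (j:ℚ) * c + d - 1 := by exact_mod_cast h2i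
  have key : (d:ℚ) * ((j:ℚ) * ((a:ℚ) + c)) = ((b:ℚ) + d) * ((j:ℚ) * c) - j := by
    linear_combination (-(j:ℚ)) * hFq
  have hjq : (j:ℚ) + 1 ≤ (b:ℚ) + d := by
    have : (j:ℕ) + 1 ≤ b + d := by omega
    exact_mod_cast this
  have hj0 : (0:ℚ) ≤ (j:ℚ) := by positivity
  rw [Int.ceil_eq_iff]
  constructor
  · rw [lt_div_iff₀ hq0]
    have step2 : ((b:ℚ)+d) * ((d:ℚ)*C) ≤ ((b:ℚ)+d) * ((j:ℚ)*c + d - 1) :=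
      mul_le_mul_of_nonneg_left h2 (le_of_lt hq0)
    nlinarith [key, step2, hd0, hjq, hj0]
  · rw [div_le_iff₀ hq0]
    have step : ((b:ℚ)+d) * ((j:ℚ)*c) ≤ ((b:ℚ)+d) * ((d:ℚ)*C) :=
      mul_le_mul_of_nonneg_left h1 (le_of_lt hq0)
    nlinarith [key, step, hd0, hj0]

lemma med_ceil_right (a b c d : ℕ) (hb2 : 2 ≤ b) (hd : 0 < d) (hab : Nat.Coprime a b)
    (hF : b * c = a * d + 1) (j : ℕ) (hj : j ≤ b + 1) :
    ⌈((d:ℚ) + j) * (((a:ℚ) + c) / ((b:ℚ) + d))⌉ = c + ⌈(j : ℚ) * ((a:ℚ) / b)⌉ := by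
  have hb0 : (0:ℚ) < b := by positivity
  have hq0 : (0:ℚ) < (b:ℚ) + d := by positivity
  have hFq : (b:ℚ) * c = (a:ℚ) * d + 1 := by exact_mod_cast hF
  rw [mul_div_assoc', mul_div_assoc']
  set A := ⌈(j:ℚ) * a / b⌉ with hA
  have h1i : (j:ℤ) * a ≤ (b:ℤ) * A := by
    have h := Int.le_ceil ((j:ℚ) * a / b)
    rw [div_le_iff₀ hb0] at h
    have : (j:ℚ) * a ≤ (b:ℚ) * A := by linarith
    exact_mod_cast this
  have h2i : (b:ℤ) * A ≤ (j:ℤ) * a + b - 1 := by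
    have h := Int.ceil_lt_add_one ((j:ℚ) * a / b)
    have h'' : (A:ℚ) - 1 < (j:ℚ) * a / b := by linarith
    rw [lt_div_iff₀ hb0] at h''
    have h' : (b:ℚ) * A < (j:ℚ) * a + b := by linarith
    have : (b:ℤ) * A < (j:ℤ) * a + b := by exact_mod_cast h'
    linarith
  have hmain : ((b:ℚ)+d) * ((j:ℚ)*a) + (j:ℚ) - b ≤ ((b:ℚ)+d) * ((b:ℚ)*A) := by
    rcases Nat.lt_or_ge j (b+1) with hjb | hjb
    · have h1q : (j:ℚ) * a ≤ (b:ℚ) * A := by exact_mod_cast h1i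
      have : (j:ℚ) ≤ b := by exact_mod_cast Nat.lt_succ_iff.mp hjb
      nlinarith [mul_le_mul_of_nonneg_left h1q (le_of_lt hq0)]
    · have hjeq : j = b + 1 := by omega
      have hstrict : (j:ℤ) * a + 1 ≤ (b:ℤ) * A := by
        rcases h1i.lt_or_eq with h | h
        · linarith
        · exfalso
          have hdvd : (b:ℤ) ∣ (j:ℤ) * a := ⟨A, h ▸ rfl⟩
          have hdvdn : b ∣ j * a := by exact_mod_cast hdvd
          rw [hjeq] at hdvdn
          have hcop : Nat.Coprime b (b+1) :=
            Nat.coprime_self_add_right.mpr (Nat.coprime_one_right b)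
          have hba : b ∣ a := hcop.dvd_of_dvd_mul_left hdvdn
          have hb1 : b ∣ 1 := hab ▸ Nat.dvd_gcd hba dvd_rfl
          have := Nat.le_of_dvd one_pos hb1
          omega
      have hstq : (j:ℚ) * a + 1 ≤ (b:ℚ) * A := by exact_mod_cast hstrict
      have hdq1 : (1:ℚ) ≤ (d:ℚ) := by exact_mod_cast hd
      have hq1 : (1:ℚ) ≤ (b:ℚ) + d := by linarith
      have hjq : (j:ℚ) = (b:ℚ) + 1 := by exact_mod_cast hjeq
      nlinarith [mul_le_mul_of_nonneg_left hstq (le_of_lt hq0)]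
  have key : (b:ℚ) * (((d:ℚ) + j) * ((a:ℚ) + c))
      = ((b:ℚ) + d) * ((c:ℚ) * b + (j:ℚ) * a) + j - b := by
    linear_combination ((j:ℚ) - b) * hFq
  have h2q : (b:ℚ) * A ≤ (j:ℚ) * a + b - 1 := by exact_mod_cast h2i
  have hj0 : (0:ℚ) ≤ (j:ℚ) := by positivity
  have hd1 : (1:ℚ) ≤ (d:ℚ) := by exact_mod_cast hd
  rw [Int.ceil_eq_iff]
  push_cast
  constructor
  · rw [lt_div_iff₀ hq0]
    have step2 : ((b:ℚ)+d) * ((b:ℚ)*A) ≤ ((b:ℚ)+d) * ((j:ℚ)*a + b - 1) :=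
      mul_le_mul_of_nonneg_left h2q (le_of_lt hq0)
    nlinarith [key, step2, hb0, hj0, hd1]
  · rw [div_le_iff₀ hq0]
    nlinarith [key, hmain, hb0]

lemma med_floor_left (a b c d : ℕ) (hb : 0 < b) (hd2 : 2 ≤ d)
    (hF : b * c = a * d + 1) (j : ℕ) (hj : j ≤ b + 1) :
    ⌊(j : ℚ) * (((a:ℚ) + c) / ((b:ℚ) + d))⌋ = ⌊(j : ℚ) * ((a:ℚ) / b)⌋ := by
  have hb0 : (0:ℚ) < b := by exact_mod_cast hb
  have hq0 : (0:ℚ) < (b:ℚ) + d := by positivity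
  have hFq : (b:ℚ) * c = (a:ℚ) * d + 1 := by exact_mod_cast hF
  rw [mul_div_assoc', mul_div_assoc']
  set F := ⌊(j:ℚ) * a / b⌋ with hFdef
  have h1 : (b:ℚ) * F ≤ (j:ℚ) * a := by
    have h := Int.floor_le ((j:ℚ) * a / b)
    rw [le_div_iff₀ hb0] at h
    linarith
  have h2i : (j:ℤ) * a ≤ (b:ℤ) * F + b - 1 := by
    have h := Int.lt_floor_add_one ((j:ℚ) * a / b)
    rw [div_lt_iff₀ hb0] at h
    have h' : (j:ℚ) * a < (b:ℚ) * F + b := by linarith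
    have : (j:ℤ) * a < (b:ℤ) * F + b := by exact_mod_cast h'
    linarith
  have h2 : (j:ℚ) * a ≤ (b:ℚ) * F + b - 1 := by exact_mod_cast h2i
  have key : (b:ℚ) * ((j:ℚ) * ((a:ℚ) + c)) = ((b:ℚ) + d) * ((j:ℚ) * a) + j := by
    linear_combination (j:ℚ) * hFq
  have hjq : (j:ℚ) + 1 ≤ (b:ℚ) + d := by
    have : (j:ℕ) + 1 ≤ b + d := by omega
    exact_mod_cast this
  have hj0 : (0:ℚ) ≤ (j:ℚ) := by positivity
  rw [Int.floor_eq_iff]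
  constructor
  · rw [le_div_iff₀ hq0]
    have step : ((b:ℚ)+d) * ((b:ℚ)*F) ≤ ((b:ℚ)+d) * ((j:ℚ)*a) :=
      mul_le_mul_of_nonneg_left h1 (le_of_lt hq0)
    nlinarith [key, step, hb0, hj0]
  · rw [div_lt_iff₀ hq0]
    have step2 : ((b:ℚ)+d) * ((j:ℚ)*a) ≤ ((b:ℚ)+d) * ((b:ℚ)*F + b - 1) :=
      mul_le_mul_of_nonneg_left h2 (le_of_lt hq0)
    nlinarith [key, step2, hb0, hjq, hj0]

lemma med_floor_right (a b c d : ℕ) (hb : 0 < b) (hd2 : 2 ≤ d) (hcd : Nat.Coprime c d)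
    (hF : b * c = a * d + 1) (j : ℕ) (hj : j ≤ d + 1) :
    ⌊((b:ℚ) + j) * (((a:ℚ) + c) / ((b:ℚ) + d))⌋ = a + ⌊(j : ℚ) * ((c:ℚ) / d)⌋ := by
  have hd0 : (0:ℚ) < d := by
    have : (0:ℕ) < d := by omega
    exact_mod_cast this
  have hq0 : (0:ℚ) < (b:ℚ) + d := by positivity
  have hFq : (b:ℚ) * c = (a:ℚ) * d + 1 := by exact_mod_cast hF
  rw [mul_div_assoc', mul_div_assoc']
  set G := ⌊(j:ℚ) * c / d⌋ with hGdef
  have h1i : (d:ℤ) * G ≤ (j:ℤ) * c := by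
    have h := Int.floor_le ((j:ℚ) * c / d)
    rw [le_div_iff₀ hd0] at h
    have : (d:ℚ) * G ≤ (j:ℚ) * c := by linarith
    exact_mod_cast this
  have h2i : (j:ℤ) * c ≤ (d:ℤ) * G + d - 1 := by
    have h := Int.lt_floor_add_one ((j:ℚ) * c / d)
    rw [div_lt_iff₀ hd0] at h
    have h' : (j:ℚ) * c < (d:ℚ) * G + d := by linarith
    have : (j:ℤ) * c < (d:ℤ) * G + d := by exact_mod_cast h'
    linarith
  have h2 : (j:ℚ) * c ≤ (d:ℚ) * G + d - 1 := by exact_mod_cast h2i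
  have hmain : ((b:ℚ)+d) * ((d:ℚ)*G) ≤ ((b:ℚ)+d) * ((j:ℚ)*c) + (d:ℚ) - j := by
    rcases Nat.lt_or_ge j (d+1) with hjd | hjd
    · have h1q : (d:ℚ) * G ≤ (j:ℚ) * c := by exact_mod_cast h1i
      have : (j:ℚ) ≤ d := by exact_mod_cast Nat.lt_succ_iff.mp hjd
      nlinarith [mul_le_mul_of_nonneg_left h1q (le_of_lt hq0)]
    · have hjeq : j = d + 1 := by omega
      have hstrict : (d:ℤ) * G + 1 ≤ (j:ℤ) * c := by
        rcases h1i.lt_or_eq with h | h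
        · linarith
        · exfalso
          have hdvd : (d:ℤ) ∣ (j:ℤ) * c := ⟨G, h ▸ rfl⟩
          have hdvdn : d ∣ j * c := by exact_mod_cast hdvd
          rw [hjeq] at hdvdn
          have hcop : Nat.Coprime d (d+1) :=
            Nat.coprime_self_add_right.mpr (Nat.coprime_one_right d)
          have hdc : d ∣ c := hcop.dvd_of_dvd_mul_left hdvdn
          have hd1 : d ∣ 1 := hcd ▸ Nat.dvd_gcd hdc dvd_rfl
          have := Nat.le_of_dvd one_pos hd1
          omega
      have hstq : (d:ℚ) * G + 1 ≤ (j:ℚ) * c := by exact_mod_cast hstrict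
      have hbq1 : (0:ℚ) ≤ (b:ℚ) := by positivity
      have hjq : (j:ℚ) = (d:ℚ) + 1 := by exact_mod_cast hjeq
      nlinarith [mul_le_mul_of_nonneg_left hstq (le_of_lt hq0)]
  have key : (d:ℚ) * (((b:ℚ) + j) * ((a:ℚ) + c))
      = ((b:ℚ) + d) * ((a:ℚ) * d + (j:ℚ) * c) + d - j := by
    linear_combination ((d:ℚ) - j) * hFq
  have hj0 : (0:ℚ) ≤ (j:ℚ) := by positivity
  rw [Int.floor_eq_iff]
  push_cast
  constructor
  · rw [le_div_iff₀ hq0]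
    nlinarith [key, hmain, hd0]
  · rw [div_lt_iff₀ hq0]
    have step2 : ((b:ℚ)+d) * ((j:ℚ)*c) ≤ ((b:ℚ)+d) * ((d:ℚ)*G + d - 1) :=
      mul_le_mul_of_nonneg_left h2 (le_of_lt hq0)
    have hbq : (1:ℚ) ≤ (b:ℚ) := by exact_mod_cast hb
    nlinarith [key, step2, hd0, hj0, hbq]

lemma alpha_left (a b c d : ℕ) (hb2 : 2 ≤ b) (hd : 0 < d)
    (hF : b * c = a * d + 1) (j : ℕ) (hj : j ≤ d) :
    alpha01 (((a:ℚ) + c) / ((b:ℚ) + d)) j = alpha01 ((c:ℚ) / d) j := by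
  unfold alpha01
  have e1 := med_ceil_left a b c d hb2 hd hF (j+1) (by omega)
  have e2 := med_ceil_left a b c d hb2 hd hF j (by omega)
  push_cast at e1
  rw [e1, e2]

lemma alpha_right (a b c d : ℕ) (hb2 : 2 ≤ b) (hd : 0 < d) (hab : Nat.Coprime a b)
    (hF : b * c = a * d + 1) (j : ℕ) (hj : j ≤ b) :
    alpha01 (((a:ℚ) + c) / ((b:ℚ) + d)) (d + j) = alpha01 ((a:ℚ) / b) j := by
  unfold alpha01
  have e1 := med_ceil_right a b c d hb2 hd hab hF (j+1) (by omega)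
  have e2 := med_ceil_right a b c d hb2 hd hab hF j (by omega)
  push_cast at e1 e2 ⊢
  rw [show ((d:ℚ) + (j:ℚ) + 1) = ((d:ℚ) + ((j:ℚ) + 1)) by ring, e1, e2]
  ring

lemma beta_left (a b c d : ℕ) (hb : 0 < b) (hd2 : 2 ≤ d)
    (hF : b * c = a * d + 1) (j : ℕ) (hj : j ≤ b) :
    beta10 (((a:ℚ) + c) / ((b:ℚ) + d)) j = beta10 ((a:ℚ) / b) j := by
  unfold beta10
  have e1 := med_floor_left a b c d hb hd2 hF (j+1) (by omega)
  have e2 := med_floor_left a b c d hb hd2 hF j (by omega)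
  push_cast at e1
  rw [e1, e2]

lemma beta_right (a b c d : ℕ) (hb : 0 < b) (hd2 : 2 ≤ d) (hcd : Nat.Coprime c d)
    (hF : b * c = a * d + 1) (j : ℕ) (hj : j ≤ d) :
    beta10 (((a:ℚ) + c) / ((b:ℚ) + d)) (b + j) = beta10 ((c:ℚ) / d) j := by
  unfold beta10
  have e1 := med_floor_right a b c d hb hd2 hcd hF (j+1) (by omega)
  have e2 := med_floor_right a b c d hb hd2 hcd hF j (by omega)
  push_cast at e1 e2 ⊢
  rw [show ((b:ℚ) + (j:ℚ) + 1) = ((b:ℚ) + ((j:ℚ) + 1)) by ring, e1, e2]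
  ring

/-- if `a/b < c/d` are Farey neighbors (`bc - ad = 1`) with mediant
`p/q = (a+c)/(b+d)`, then `W^{01}_{p/q} = W^{01}_{c/d} · W^{01}_{a/b}` (when
`0 < a/b < c/d ≤ 1`) and `W^{10}_{p/q} = W^{10}_{a/b} · W^{10}_{c/d}` (when
`0 ≤ a/b < c/d < 1`). -/
theorem mediant_word_concatenation
    (a b c d : ℕ) (hb : 0 < b) (hd : 0 < d)
    (hab : Nat.Coprime a b) (hcd : Nat.Coprime c d)
    (hFarey : b * c = a * d + 1) :
    ((0 < a ∧ c ≤ d) →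
      word01 (((a : ℚ) + c) / ((b : ℚ) + d)) (b + d) =
        word01 ((c : ℚ) / d) d ++ word01 ((a : ℚ) / b) b) ∧
    (c < d →
      word10 (((a : ℚ) + c) / ((b : ℚ) + d)) (b + d) =
        word10 ((a : ℚ) / b) b ++ word10 ((c : ℚ) / d) d) := by
  constructor
  · rintro ⟨ha, hcle⟩
    have hb2 : 2 ≤ b := by
      have h1 : a * d + 1 ≤ b * d := by
        rw [← hFarey]
        exact Nat.mul_le_mul_left b hcle
      have h2 : a < b := by
        have : a * d < b * d := by omega
        exact Nat.lt_of_mul_lt_mul_right this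
      omega
    apply List.ext_getElem
    · simp [word01]
      omega
    · intro n h1 h2
      have hn : n < b + d := by simpa [word01] using h1
      rcases Nat.lt_or_ge n d with h | h
      · rw [List.getElem_append_left (by simpa [word01] using h)]
        simp only [word01, List.getElem_map, List.getElem_range]
        exact alpha_left a b c d hb2 hd hFarey (n + 1) (by omega)
      · obtain ⟨m, rfl⟩ : ∃ m, n = d + m := ⟨n - d, by omega⟩
        rw [List.getElem_append_right (by simpa [word01] using h)]
        simp only [word01, List.getElem_map, List.getElem_range]
        simp only [List.length_map, List.length_range, Nat.add_sub_cancel_left]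
        rw [show d + m + 1 = d + (m + 1) by omega]
        exact alpha_right a b c d hb2 hd hab hFarey (m + 1) (by omega)
  · intro hcd'
    have hc1 : 1 ≤ c := by
      rcases Nat.eq_zero_or_pos c with h | h
      · subst h; simp at hFarey
      · exact h
    have hd2 : 2 ≤ d := by omega
    apply List.ext_getElem
    · simp [word10]
    · intro n h1 h2
      have hn : n < b + d := by simpa [word10] using h1
      rcases Nat.lt_or_ge n b with h | h
      · rw [List.getElem_append_left (by simpa [word10] using h)]
        simp only [word10, List.getElem_map, List.getElem_range]
        exact beta_left a b c d hb hd2 hFarey (n + 1) (by omega)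
      · obtain ⟨m, rfl⟩ : ∃ m, n = b + m := ⟨n - b, by omega⟩
        rw [List.getElem_append_right (by simpa [word10] using h)]
        simp only [word10, List.getElem_map, List.getElem_range]
        simp only [List.length_map, List.length_range, Nat.add_sub_cancel_left]
        rw [show b + m + 1 = b + (m + 1) by omega]
        exact beta_right a b c d hb hd2 hcd hFarey (m + 1) (by omega)
end

section
/- Let a/b and c/d be Farey neighbors with 0 < a/b < c/d ≤ 1, and let p/q be any reduced fraction with a/b < p/q < c/d. Then there exist an integer k ≥ 0 and ζ_1, …, ζ_k ∈ {a/b, c/d} such that W^{01}_{p/q} equals the concatenation W^{01}_{c/d} · W^{01}_{ζ_1} ⋯ W^{01}_{ζ_k} · W^{01}_{a/b}. Similarly, if 0 ≤ a/b < c/d < 1, then there exist k ≥ 0 and ζ_1, …, ζ_k ∈ {a/b, c/d} such that W^{10}_{p/q} = W^{10}_{a/b} · W^{10}_{ζ_1} ⋯ W^{10}_{ζ_k} · W^{10}_{c/d}. -/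
/-!
Let `m = (a+c)/(b+d)` be the mediant. Since `bc - ad = 1`, `⌊j m⌋ = ⌊j a/b⌋` for `j ≤ b + 1` and
`⌊(b+j) m⌋ = a + ⌊j c/d⌋` for `j ≤ d + 1` (once `d ≥ 2`), so `W¹⁰(m) = W¹⁰(a/b) · W¹⁰(c/d)`.
Descending the Stern–Brocot tree from `(a/b, c/d)` towards `p/q`, each step replaces the word of a
mediant by the words of its two parents, so `W¹⁰(p/q)` keeps the shape
`W¹⁰(a/b) · {W¹⁰(a/b), W¹⁰(c/d)}∗ · W¹⁰(c/d)`. The descent terminates because a fraction strictly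
between Farey neighbours has denominator at least `b + d`, and it ends exactly at `p/q` because
mediants of Farey neighbours are reduced. The 01-words follow from `α_j(r) = 1 - β_j(1 - r)`:
the reflection `r ↦ 1 - r` maps Farey neighbours to Farey neighbours in reverse order.
-/

open Computability

namespace Language

variable {α β : Type*} {l : Language α} {x y u v : List α}

lemma mem_kstar_of_mem (hx : x ∈ l) : x ∈ l∗ :=
  le_kstar (a := l) hx

lemma append_mem_kstar (hx : x ∈ l∗) (hy : y ∈ l∗) : x ++ y ∈ l∗ :=
  kstar_mul_kstar l ▸ append_mem_mul hx hy

lemma kstar_pair_le_kstar (hu : u ∈ l∗) (hv : v ∈ l∗) : ({u, v} : Language α)∗ ≤ l∗ :=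
  (kstar_mono (Set.pair_subset hu hv)).trans (kstar_idem l).le

lemma map_mem_kstar_pair (f : α → β) (hx : x ∈ ({u, v} : Language α)∗) :
    x.map f ∈ ({u.map f, v.map f} : Language β)∗ := by
  have hpair : ({u.map f, v.map f} : Language β) = map f {u, v} := (Set.image_pair _ _ _).symm
  rw [hpair, ← map_kstar]
  exact ⟨x, hx, rfl⟩

lemma exists_seq_of_mem_kstar_pair {ι : Type*} (f : ι → List α) (s t : ι)
    (hx : x ∈ ({f s, f t} : Language α)∗) :
    ∃ (k : ℕ) (ζ : ℕ → ι), (∀ i, 1 ≤ i → i ≤ k → ζ i = s ∨ ζ i = t) ∧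
      x = ((List.range k).map fun i => f (ζ (i + 1))).flatten := by
  classical
  obtain ⟨L, rfl, hL⟩ := mem_kstar.mp hx
  refine ⟨L.length, fun i => if L.getD (i - 1) [] = f s then s else t,
    fun i _ _ => by dsimp only; split_ifs <;> simp,
    congrArg _ (List.ext_getElem (by simp) fun i hi _ => ?_)⟩
  simp only [List.getElem_map, List.getElem_range, Nat.add_sub_cancel,
    List.getD_eq_getElem _ _ hi]
  have hLi : L[i] = f s ∨ L[i] = f t := hL _ (List.getElem_mem hi)
  split_ifs with hs
  · exact hs
  · exact hLi.resolve_left hs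

end Language

section Mediant

variable {a b c d p q : ℕ}

lemma floor_mul_div_eq_iff {j u v : ℕ} {n : ℤ} (hv : 0 < v) :
    ⌊(j : ℚ) * (u / v)⌋ = n ↔ n * v ≤ j * u ∧ (j * u : ℤ) < (n + 1) * v := by
  rw [Int.floor_eq_iff, mul_div_assoc', le_div_iff₀ (by positivity), div_lt_iff₀ (by positivity)]
  norm_cast

lemma floor_mul_mediant_of_lt (hb : 0 < b) (hF : b * c = a * d + 1) {j : ℕ} (hj : j < b + d) :
    ⌊(j : ℚ) * ((a + c : ℕ) / (b + d : ℕ))⌋ = ⌊(j : ℚ) * (a / b)⌋ := by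
  obtain ⟨hlo, hhi⟩ := (floor_mul_div_eq_iff (j := j) (u := a) hb).mp rfl
  set n := ⌊(j : ℚ) * (a / b)⌋
  -- `n b d ≤ j a d = j (b c - 1)`
  have hnd : n * d ≤ j * c := by
    by_contra! h
    nlinarith [mul_le_mul_of_nonneg_right hlo (Int.natCast_nonneg d)]
  rw [floor_mul_div_eq_iff (by omega)]
  push_cast
  constructor <;> nlinarith

lemma floor_add_mul_mediant (hb : 0 < b) (hd : 2 ≤ d) (hF : b * c = a * d + 1) {j : ℕ}
    (hj : j ≤ d + 1) :
    ⌊((b + j : ℕ) : ℚ) * ((a + c : ℕ) / (b + d : ℕ))⌋ = a + ⌊(j : ℚ) * (c / d)⌋ := by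
  obtain ⟨hlo, hhi⟩ := (floor_mul_div_eq_iff (j := j) (u := c) (v := d) (by omega)).mp rfl
  set n := ⌊(j : ℚ) * (c / d)⌋
  -- `n b d ≤ j b c = j a d + j` and `j < 2 d`
  have hnb : n * b ≤ j * a + 1 := by
    by_contra! h
    nlinarith [mul_le_mul_of_nonneg_right hlo (Int.natCast_nonneg b)]
  -- `j a d + j = j b c < (n + 1) b d`
  have hja : j * a < (n + 1) * b := by
    by_contra! h
    nlinarith [mul_le_mul_of_nonneg_right hlo (Int.natCast_nonneg b)]
  rw [floor_mul_div_eq_iff (by omega)]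
  push_cast
  constructor <;> nlinarith

lemma beta10_eq_floor_sub (r : ℚ) (j : ℕ) :
    beta10 r j = ⌊((j + 1 : ℕ) : ℚ) * r⌋ - ⌊(j : ℚ) * r⌋ := by
  rw [beta10, Nat.cast_succ]

lemma word10_add_eq_append {r s t : ℚ} {m n : ℕ} (e : ℤ)
    (hs : ∀ j ≤ m + 1, ⌊(j : ℚ) * r⌋ = ⌊(j : ℚ) * s⌋)
    (ht : ∀ j ≤ n + 1, ⌊((m + j : ℕ) : ℚ) * r⌋ = e + ⌊(j : ℚ) * t⌋) :
    word10 r (m + n) = word10 s m ++ word10 t n := by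
  rw [word10, List.range_add, List.map_append, List.map_map]
  congr 1
  · refine List.map_congr_left fun i hi => ?_
    rw [List.mem_range] at hi
    rw [beta10_eq_floor_sub, beta10_eq_floor_sub, hs _ (by omega), hs _ (by omega)]
  · refine List.map_congr_left fun i hi => ?_
    rw [List.mem_range] at hi
    simp only [Function.comp_apply, beta10_eq_floor_sub, Nat.add_assoc]
    rw [ht _ (by omega), ht _ (by omega)]
    ring

theorem word10_mediant (hb : 0 < b) (hd : 2 ≤ d) (hF : b * c = a * d + 1) :
    word10 ((a + c : ℕ) / (b + d : ℕ)) (b + d) = word10 (a / b) b ++ word10 (c / d) d :=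
  word10_add_eq_append a (fun _ hj => floor_mul_mediant_of_lt hb hF (by omega))
    (fun _ hj => floor_add_mul_mediant hb hd hF hj)

lemma coprime_of_farey (hF : b * c = a * d + 1) : a.Coprime b :=
  Nat.isCoprime_iff_coprime.mp
    ⟨-d, c, by linear_combination (by exact_mod_cast hF : (b * c : ℤ) = a * d + 1)⟩

lemma eq_of_div_eq_div_of_coprime {m n : ℕ} (hq : 0 < q) (hn : 0 < n) (hpq : p.Coprime q)
    (hmn : m.Coprime n) (h : (p : ℚ) / q = m / n) : p = m ∧ q = n := by
  have := Rat.div_int_inj (a := p) (b := q) (c := m) (d := n) (by omega) (by omega) hpq hmn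
    (by simpa only [Int.cast_natCast] using h)
  omega

lemma add_le_of_farey_of_lt_of_lt (hb : 0 < b) (hd : 0 < d) (hq : 0 < q)
    (hF : b * c = a * d + 1) (h1 : (a : ℚ) / b < p / q) (h2 : (p : ℚ) / q < c / d) :
    b + d ≤ q := by
  rw [div_lt_div_iff₀ (by positivity) (by positivity)] at h1 h2
  have h1' : (a * q : ℤ) < p * b := by exact_mod_cast h1
  have h2' : (p * d : ℤ) < c * q := by exact_mod_cast h2
  have hF' : (b * c : ℤ) = a * d + 1 := by exact_mod_cast hF
  -- `q = q (bc - ad)` regrouped: both brackets are positive integers.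
  have hq_eq : (q : ℤ) = d * (p * b - a * q) + b * (c * q - p * d) := by
    linear_combination (-(q : ℤ)) * hF'
  have : (b + d : ℤ) ≤ q := by nlinarith
  exact_mod_cast this

end Mediant

theorem word10_farey_decomposition {a b c d p q : ℕ} (hb : 0 < b) (hd : 2 ≤ d) (hq : 0 < q)
    (hpq : p.Coprime q) (hF : b * c = a * d + 1) (h1 : (a : ℚ) / b < p / q)
    (h2 : (p : ℚ) / q < c / d) :
    ∃ x ∈ ({word10 (a / b) b, word10 (c / d) d} : Language ℤ)∗,
      word10 (p / q) q = word10 (a / b) b ++ x ++ word10 (c / d) d := by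
  have hFl : b * (a + c) = a * (b + d) + 1 := by linear_combination hF
  have hFr : (b + d) * c = (a + c) * d + 1 := by linear_combination hF
  have hm := word10_mediant hb hd hF
  have hA : word10 (a / b) b ∈ ({word10 (a / b) b, word10 (c / d) d} : Language ℤ)∗ :=
    Language.mem_kstar_of_mem (Set.mem_insert _ _)
  have hC : word10 (c / d) d ∈ ({word10 (a / b) b, word10 (c / d) d} : Language ℤ)∗ :=
    Language.mem_kstar_of_mem (Set.mem_insert_of_mem _ rfl)
  have hAC := Language.append_mem_kstar hA hC
  rcases lt_trichotomy ((p : ℚ) / q) ((a + c : ℕ) / (b + d : ℕ)) with hlt | heq | hgt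
  -- `b + d < q` in the two recursive branches, which makes `q - (b + d)` decrease.
  · have := add_le_of_farey_of_lt_of_lt hb (by omega) hq hFl h1 hlt
    obtain ⟨x, hx, hw⟩ := word10_farey_decomposition hb (by omega) hq hpq hFl h1 hlt
    rw [hm] at hx hw
    refine ⟨x ++ word10 (a / b) b,
      Language.append_mem_kstar (Language.kstar_pair_le_kstar hA hAC hx) hA, ?_⟩
    simp [hw]
  · obtain ⟨rfl, rfl⟩ :=
      eq_of_div_eq_div_of_coprime hq (by omega) hpq (coprime_of_farey hFr) heq
    exact ⟨[], Language.nil_mem_kstar _, by simpa using hm⟩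
  · have := add_le_of_farey_of_lt_of_lt (by omega) (by omega) hq hFr hgt h2
    obtain ⟨x, hx, hw⟩ := word10_farey_decomposition (by omega) hd hq hpq hFr hgt h2
    rw [hm] at hx hw
    refine ⟨word10 (c / d) d ++ x,
      Language.append_mem_kstar hC (Language.kstar_pair_le_kstar hAC hC hx), ?_⟩
    simp [hw]
termination_by q - (b + d)

section Reflection

variable {a b c d p q : ℕ}

lemma floor_natCast_mul_one_sub (n : ℕ) (r : ℚ) : ⌊(n : ℚ) * (1 - r)⌋ = n - ⌈n * r⌉ := by
  rw [mul_one_sub, sub_eq_add_neg, Int.floor_natCast_add, Int.floor_neg, sub_eq_add_neg]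

lemma alpha01_eq_one_sub_beta10 (r : ℚ) (j : ℕ) : alpha01 r j = 1 - beta10 (1 - r) j := by
  rw [alpha01, beta10, ← Nat.cast_succ, floor_natCast_mul_one_sub, floor_natCast_mul_one_sub]
  push_cast
  ring

lemma word01_eq_map_word10 (r : ℚ) (n : ℕ) : word01 r n = (word10 (1 - r) n).map (1 - ·) := by
  simp only [word01, word10, List.map_map, Function.comp_def, alpha01_eq_one_sub_beta10]

lemma one_sub_div_eq_cast_sub_div {u v : ℕ} (huv : u ≤ v) (hv : 0 < v) :
    1 - (u : ℚ) / v = (v - u : ℕ) / v := by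
  rw [Nat.cast_sub huv, sub_div, div_self (by positivity)]

theorem word01_farey_decomposition (ha : 0 < a) (hd : 0 < d) (hq : 0 < q) (hpq : p.Coprime q)
    (hF : b * c = a * d + 1) (hcd : c ≤ d)
    (h1 : (a : ℚ) / b < p / q) (h2 : (p : ℚ) / q < c / d) :
    ∃ x ∈ ({word01 (c / d) d, word01 (a / b) b} : Language ℤ)∗,
      word01 (p / q) q = word01 (c / d) d ++ x ++ word01 (a / b) b := by
  have hab : a < b := by nlinarith
  have hpq' : p ≤ q := by
    have : (p : ℚ) / q < 1 :=
      h2.trans_le (div_le_one_of_le₀ (by exact_mod_cast hcd) (by positivity))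
    exact_mod_cast ((div_lt_one (by positivity)).mp this).le
  have hF' : d * (b - a) = (d - c) * b + 1 := by
    zify [hab.le, hcd]
    linear_combination (by exact_mod_cast hF : (b * c : ℤ) = a * d + 1)
  have hrc := one_sub_div_eq_cast_sub_div hcd hd
  have hra := one_sub_div_eq_cast_sub_div hab.le (by omega)
  have hrp := one_sub_div_eq_cast_sub_div hpq' hq
  obtain ⟨x, hx, hw⟩ := word10_farey_decomposition hd (by omega : 2 ≤ b) hq
    ((Nat.coprime_self_sub_left hpq').mpr hpq) hF'
    (by rw [← hrc, ← hrp]; linarith) (by rw [← hra, ← hrp]; linarith)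
  rw [← hrc, ← hra] at hx hw
  rw [← hrp] at hw
  simp only [word01_eq_map_word10]
  exact ⟨_, Language.map_mem_kstar_pair _ hx, by simp [hw]⟩

end Reflection

theorem word_decomposition_between_farey_neighbors_general
    (a b c d p q : ℕ) (hb : 0 < b) (hd : 0 < d) (hq : 0 < q)
    (hpq : Nat.Coprime p q)
    (hFarey : b * c = a * d + 1)
    (h1 : (a : ℚ) / b < (p : ℚ) / q) (h2 : (p : ℚ) / q < (c : ℚ) / d) :
    ((0 < a ∧ c ≤ d) →
      ∃ (k : ℕ) (ζ : ℕ → ℕ × ℕ),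
        (∀ i, 1 ≤ i → i ≤ k → ζ i = (a, b) ∨ ζ i = (c, d)) ∧
        word01 ((p : ℚ) / q) q =
          word01 ((c : ℚ) / d) d ++
            ((List.range k).map fun i =>
              word01 (((ζ (i + 1)).1 : ℚ) / ((ζ (i + 1)).2 : ℚ)) (ζ (i + 1)).2).flatten ++
            word01 ((a : ℚ) / b) b) ∧
    (c < d →
      ∃ (k : ℕ) (ζ : ℕ → ℕ × ℕ),
        (∀ i, 1 ≤ i → i ≤ k → ζ i = (a, b) ∨ ζ i = (c, d)) ∧
        word10 ((p : ℚ) / q) q =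
          word10 ((a : ℚ) / b) b ++
            ((List.range k).map fun i =>
              word10 (((ζ (i + 1)).1 : ℚ) / ((ζ (i + 1)).2 : ℚ)) (ζ (i + 1)).2).flatten ++
            word10 ((c : ℚ) / d) d) := by
  refine ⟨fun ⟨ha, hcd⟩ => ?_, fun hcd => ?_⟩
  · obtain ⟨x, hx, hw⟩ := word01_farey_decomposition ha hd hq hpq hFarey hcd h1 h2
    obtain ⟨k, ζ, hζ, rfl⟩ := Language.exists_seq_of_mem_kstar_pair
      (fun z : ℕ × ℕ => word01 (z.1 / z.2) z.2) (c, d) (a, b) hx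
    exact ⟨k, ζ, fun i hi hik => (hζ i hi hik).symm, hw⟩
  · have hd2 : 2 ≤ d := by rcases c with _ | c <;> omega
    obtain ⟨x, hx, hw⟩ := word10_farey_decomposition hb hd2 hq hpq hFarey h1 h2
    obtain ⟨k, ζ, hζ, rfl⟩ := Language.exists_seq_of_mem_kstar_pair
      (fun z : ℕ × ℕ => word10 (z.1 / z.2) z.2) (a, b) (c, d) hx
    exact ⟨k, ζ, hζ, hw⟩

/-- if `a/b < c/d` are Farey neighbors and `a/b < p/q < c/d`, then
`W^{01}_{p/q}` is a concatenation `W^{01}_{c/d} · W^{01}_{ζ_1} ⋯ W^{01}_{ζ_k} · W^{01}_{a/b}`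
with each `ζ_i ∈ {a/b, c/d}` (when `0 < a/b` and `c/d ≤ 1`), and analogously
`W^{10}_{p/q} = W^{10}_{a/b} · W^{10}_{ζ_1} ⋯ W^{10}_{ζ_k} · W^{10}_{c/d}` (when `c/d < 1`). -/
theorem word_decomposition_between_farey_neighbors
    (a b c d p q : ℕ) (hb : 0 < b) (hd : 0 < d) (hq : 0 < q)
    (hab : Nat.Coprime a b) (hcd : Nat.Coprime c d) (hpq : Nat.Coprime p q)
    (hFarey : b * c = a * d + 1)
    (h1 : (a : ℚ) / b < (p : ℚ) / q) (h2 : (p : ℚ) / q < (c : ℚ) / d) :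
    ((0 < a ∧ c ≤ d) →
      ∃ (k : ℕ) (ζ : ℕ → ℕ × ℕ),
        (∀ i, 1 ≤ i → i ≤ k → ζ i = (a, b) ∨ ζ i = (c, d)) ∧
        word01 ((p : ℚ) / q) q =
          word01 ((c : ℚ) / d) d ++
            ((List.range k).map fun i =>
              word01 (((ζ (i + 1)).1 : ℚ) / ((ζ (i + 1)).2 : ℚ)) (ζ (i + 1)).2).flatten ++
            word01 ((a : ℚ) / b) b) ∧
    (c < d →
      ∃ (k : ℕ) (ζ : ℕ → ℕ × ℕ),
        (∀ i, 1 ≤ i → i ≤ k → ζ i = (a, b) ∨ ζ i = (c, d)) ∧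
        word10 ((p : ℚ) / q) q =
          word10 ((a : ℚ) / b) b ++
            ((List.range k).map fun i =>
              word10 (((ζ (i + 1)).1 : ℚ) / ((ζ (i + 1)).2 : ℚ)) (ζ (i + 1)).2).flatten ++
            word10 ((c : ℚ) / d) d) :=
  word_decomposition_between_farey_neighbors_general a b c d p q hb hd hq hpq hFarey h1 h2
end

section
/- Assume the 01-hypothesis: A/B and S/T are Farey neighbors with 0 ≤ A/B < S/T ≤ 1, P/Q = (A+S)/(B+T) is their mediant, n ≥ 1, S_n/T_n = ((n−1)P+S)/((n−1)Q+T), and a/b is a reduced fraction with P/Q < a/b < S_n/T_n. Then the 01-digit sequence (γ_j)_{j≥1} of the broken line BL(P/Q, a/b, n) is purely periodic with minimal period exactly b (γ_{j+b} = γ_j for all j ≥ 1, and no smaller period works), and the sequence (γ_j) is Sturmian. -/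
/-- The broken line with slopes `r` (before) and `s` (after) and hinge abscissa `h`. -/
noncomputable def BLfun (r s : ℚ) (h : ℕ) (x : ℚ) : ℚ :=
  if x ≤ (h : ℚ) then r * x else s * (x - h) + r * h

/-- The 01-digit sequence of the broken line: `γ_j = ⌈f(j+1)⌉ - ⌈f(j)⌉`. -/
noncomputable def gammaBL (r s : ℚ) (h : ℕ) (j : ℕ) : ℤ :=
  ⌈BLfun r s h ((j : ℚ) + 1)⌉ - ⌈BLfun r s h (j : ℚ)⌉

/-- The 10-digit sequence of the broken line: `δ_j = ⌊f(j+1)⌋ - ⌊f(j)⌋`. -/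
noncomputable def deltaBL (r s : ℚ) (h : ℕ) (j : ℕ) : ℤ :=
  ⌊BLfun r s h ((j : ℚ) + 1)⌋ - ⌊BLfun r s h (j : ℚ)⌋

/-- The angle `θ_{01}` of the broken line, `Σ_{j≥1} γ_j 2^{-j}`. -/
noncomputable def theta01BL (r s : ℚ) (h : ℕ) : ℝ :=
  ∑' j : ℕ, (gammaBL r s h (j + 1) : ℝ) / 2 ^ (j + 1)

/-- The angle `θ_{10}` of the broken line, `Σ_{j≥1} δ_j 2^{-j}`. -/
noncomputable def theta10BL (r s : ℚ) (h : ℕ) : ℝ :=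
  ∑' j : ℕ, (deltaBL r s h (j + 1) : ℝ) / 2 ^ (j + 1)


lemma keyL (A B S T P Q Sn Tn n j m : ℤ)
    (hQ : 0 < Q) (hT : 0 < T) (hn : 1 ≤ n)
    (hFarey : B*S = A*T+1) (hP : P = A+S) (hQeq : Q = B+T)
    (hSn : Sn = (n-1)*P + S) (hTn : Tn = (n-1)*Q + T)
    (hj0 : 0 ≤ j) (hjn : j ≤ n*Q)
    (hm1 : j*P ≤ m*Q) (hm2 : m*Q < j*P + Q) :
    Sn*(n*Q - j) ≤ Tn*(n*P + 1 - m) := by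
  have hQS : Q*S = T*P + 1 := by rw [hP, hQeq]; linear_combination hFarey
  have hw : (n*Q - j) + (m*Q - j*P)*T = Q*((n*Q - j)*S - T*(n*P - m)) := by
    linear_combination (-(n*Q - j))*hQS
  have hwlt : (n*Q - j)*S - T*(n*P - m) < n + T := by
    by_contra hcon
    push_neg at hcon
    nlinarith [mul_le_mul_of_nonneg_right (by linarith : m*Q - j*P ≤ Q - 1) hT.le,
      mul_le_mul_of_nonneg_left hcon hQ.le]
  have hiTn : n*Q - j ≤ Tn*(Q - (m*Q - j*P)) := by
    have h1 : Q*((n*Q - j)*S - T*(n*P - m)) ≤ Q*(n+T-1) := by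
      have : (n*Q - j)*S - T*(n*P - m) ≤ n + T - 1 := by linarith
      exact mul_le_mul_of_nonneg_left this hQ.le
    have h2 : n*Q - j ≤ Q*(n+T-1) - (m*Q - j*P)*T := by linarith
    rw [hTn]
    nlinarith [mul_nonneg (mul_nonneg (by linarith : (0:ℤ) ≤ n-1) hQ.le)
      (by linarith : (0:ℤ) ≤ Q - (m*Q - j*P) - 1)]
  have hSnQ : Sn*Q = Tn*P + 1 := by rw [hSn, hTn]; linear_combination hQS
  have key : Q*(Sn*(n*Q - j)) ≤ Q*(Tn*(n*P+1-m)) := by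
    have hE : Q*(Tn*(n*P+1-m)) - Q*(Sn*(n*Q-j)) = Tn*(Q-(m*Q - j*P)) - (n*Q - j) := by
      linear_combination (-(n*Q - j))*hSnQ
    linarith
  exact le_of_mul_le_mul_left key hQ


lemma ceil0 (b u M : ℤ) (hb : 0 < b) (h : u = b*M) : ⌈(u:ℚ)/(b:ℚ)⌉ = M := by
  rw [h]
  push_cast
  rw [mul_div_cancel_left₀ _ (by exact_mod_cast hb.ne' : ((b:ℚ)) ≠ 0)]
  exact Int.ceil_intCast M

lemma ceilv (b u M v : ℤ) (hb : 0 < b) (h : u = b*M + v) (hv1 : 1 ≤ v) (hv2 : v ≤ b) :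
    ⌈(u:ℚ)/(b:ℚ)⌉ = M + 1 := by
  have hbq : (0:ℚ) < (b:ℚ) := by exact_mod_cast hb
  have hq : (u:ℚ) = (b:ℚ)*(M:ℚ) + (v:ℚ) := by exact_mod_cast congrArg (fun z : ℤ => (z:ℚ)) h
  have hv1' : (1:ℚ) ≤ (v:ℚ) := by exact_mod_cast hv1
  have hv2' : (v:ℚ) ≤ (b:ℚ) := by exact_mod_cast hv2
  rw [Int.ceil_eq_iff]
  constructor
  · push_cast
    rw [lt_div_iff₀ hbq]
    nlinarith
  · push_cast
    rw [div_le_iff₀ hbq]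
    nlinarith



set_option maxHeartbeats 2000000 in
lemma ceil_BL (A B S T P Q Sn Tn n a b : ℕ)
    (hT : 0 < T)
    (hFarey : B * S = A * T + 1)
    (hn : 1 ≤ n)
    (hP : P = A + S) (hQ : Q = B + T)
    (hSn : Sn = (n - 1) * P + S) (hTn : Tn = (n - 1) * Q + T)
    (hb : 0 < b)
    (h1 : (P : ℚ) / Q < (a : ℚ) / b) (h2 : (a : ℚ) / b < (Sn : ℚ) / Tn)
    (j : ℕ) :
    ⌈BLfun ((P:ℚ)/Q) ((a:ℚ)/b) (n*Q) (j:ℚ)⌉ =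
      ⌈(((a:ℤ)*(j:ℤ) + ((b:ℤ)*((n:ℤ)*(P:ℤ)) - (a:ℤ)*((n:ℤ)*(Q:ℤ)))) : ℚ)/(b:ℚ)⌉ := by
  have hQpos : 0 < Q := by omega
  have hTnpos : 0 < Tn := by omega
  have hbq : (0:ℚ) < (b:ℚ) := by exact_mod_cast hb
  have hQq : (0:ℚ) < (Q:ℚ) := by exact_mod_cast hQpos
  have hTnq : (0:ℚ) < (Tn:ℚ) := by exact_mod_cast hTnpos
  have h1' : (P:ℤ)*(b:ℤ) < (a:ℤ)*(Q:ℤ) := by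
    have := (div_lt_div_iff₀ hQq hbq).mp h1
    exact_mod_cast this
  have h2' : (a:ℤ)*(Tn:ℤ) < (Sn:ℤ)*(b:ℤ) := by
    have := (div_lt_div_iff₀ hbq hTnq).mp h2
    exact_mod_cast this
  unfold BLfun
  by_cases hj : (j:ℚ) ≤ ((n*Q : ℕ):ℚ)
  · rw [if_pos hj]
    have hjn : (j:ℤ) ≤ (n:ℤ)*(Q:ℤ) := by
      have : (j:ℕ) ≤ n*Q := by exact_mod_cast hj
      exact_mod_cast this
    set m := ⌈(P:ℚ)/Q * (j:ℚ)⌉ with hm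
    have hm1 : (j:ℤ)*(P:ℤ) ≤ m*(Q:ℤ) := by
      have h := Int.le_ceil ((P:ℚ)/Q * (j:ℚ))
      rw [← hm, div_mul_eq_mul_div, div_le_iff₀ hQq] at h
      exact_mod_cast (by linarith [h] : (j:ℚ)*(P:ℚ) ≤ (m:ℚ)*(Q:ℚ))
    have hm2 : m*(Q:ℤ) < (j:ℤ)*(P:ℤ) + (Q:ℤ) := by
      have h := Int.ceil_lt_add_one ((P:ℚ)/Q * (j:ℚ))
      rw [← hm, div_mul_eq_mul_div] at h
      have h' : ((m:ℚ) - 1) * (Q:ℚ) < (P:ℚ)*(j:ℚ) := by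
        rw [← lt_div_iff₀ hQq] at *
        linarith
      exact_mod_cast (by nlinarith [h'] : (m:ℚ)*(Q:ℚ) < (j:ℚ)*(P:ℚ) + (Q:ℚ))
    clear hm
    clear_value m
    have hL : (Sn:ℤ)*((n:ℤ)*Q - j) ≤ (Tn:ℤ)*((n:ℤ)*P + 1 - m) := by
      apply keyL (A:ℤ) (B:ℤ) (S:ℤ) (T:ℤ) (P:ℤ) (Q:ℤ) (Sn:ℤ) (Tn:ℤ) (n:ℤ) (j:ℤ) m
        (by exact_mod_cast hQpos) (by exact_mod_cast hT) (by exact_mod_cast hn)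
        (by exact_mod_cast hFarey) (by exact_mod_cast hP) (by exact_mod_cast hQ)
        ?_ ?_ (by positivity) hjn hm1 hm2
      · have h' : (Sn:ℤ) = ((n-1 : ℕ):ℤ)*(P:ℤ) + (S:ℤ) := by exact_mod_cast hSn
        rw [h', Nat.cast_sub hn]; push_cast; ring
      · have h' : (Tn:ℤ) = ((n-1 : ℕ):ℤ)*(Q:ℤ) + (T:ℤ) := by exact_mod_cast hTn
        rw [h', Nat.cast_sub hn]; push_cast; ring
    symm
    rw [Int.ceil_eq_iff]
    have hup : (a:ℤ)*(j:ℤ) + ((b:ℤ)*((n:ℤ)*(P:ℤ)) - (a:ℤ)*((n:ℤ)*(Q:ℤ))) ≤ m*(b:ℤ) := by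
      nlinarith [mul_nonneg (by linarith : (0:ℤ) ≤ (a:ℤ)*(Q:ℤ) - (P:ℤ)*(b:ℤ))
          (by linarith : (0:ℤ) ≤ (n:ℤ)*(Q:ℤ) - (j:ℤ)),
        mul_nonneg (by positivity : (0:ℤ) ≤ (b:ℤ)) (by linarith : (0:ℤ) ≤ m*(Q:ℤ) - (j:ℤ)*(P:ℤ)),
        (by exact_mod_cast hQpos : (0:ℤ) < (Q:ℤ))]
    have hlo : m*(b:ℤ) - (b:ℤ) < (a:ℤ)*(j:ℤ) + ((b:ℤ)*((n:ℤ)*(P:ℤ)) - (a:ℤ)*((n:ℤ)*(Q:ℤ))) := by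
      have hQZ : (0:ℤ) < (Q:ℤ) := by exact_mod_cast hQpos
      rcases eq_or_lt_of_le hjn with he | hlt
      · -- j = nQ, then m = nP
        have hm3 : ((n:ℤ)*(P:ℤ)) ≤ m := by
          have : ((n:ℤ)*(P:ℤ))*(Q:ℤ) ≤ m*(Q:ℤ) := by nlinarith [hm1, he]
          exact le_of_mul_le_mul_right this hQZ
        have hm4 : m ≤ (n:ℤ)*(P:ℤ) := by
          have : m*(Q:ℤ) < ((n:ℤ)*(P:ℤ) + 1)*(Q:ℤ) := by nlinarith [hm2, he]
          have := lt_of_mul_lt_mul_right this hQZ.le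
          omega
        have hbZ : (0:ℤ) < (b:ℤ) := by exact_mod_cast hb
        nlinarith [he]
      · have hpos : (0:ℤ) < (n:ℤ)*(Q:ℤ) - (j:ℤ) := by linarith
        have c1 : (a:ℤ)*(Tn:ℤ)*((n:ℤ)*(Q:ℤ)-(j:ℤ)) < (Sn:ℤ)*(b:ℤ)*((n:ℤ)*(Q:ℤ)-(j:ℤ)) :=
          mul_lt_mul_of_pos_right h2' hpos
        have c2 : (b:ℤ)*((Sn:ℤ)*((n:ℤ)*(Q:ℤ)-(j:ℤ))) ≤ (b:ℤ)*((Tn:ℤ)*((n:ℤ)*(P:ℤ)+1-m)) :=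
          mul_le_mul_of_nonneg_left hL (by positivity)
        have c3 : (Tn:ℤ)*((a:ℤ)*((n:ℤ)*(Q:ℤ)-(j:ℤ))) < (Tn:ℤ)*((b:ℤ)*((n:ℤ)*(P:ℤ)+1-m)) := by
          nlinarith [c1, c2]
        have c4 := lt_of_mul_lt_mul_left c3 (by positivity : (0:ℤ) ≤ (Tn:ℤ))
        linarith
    have hlo' : (m - 1)*(b:ℤ) < (a:ℤ)*(j:ℤ) + ((b:ℤ)*((n:ℤ)*(P:ℤ)) - (a:ℤ)*((n:ℤ)*(Q:ℤ))) := by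
      linarith [hlo]
    constructor
    · push_cast
      rw [lt_div_iff₀ hbq]
      exact_mod_cast hlo'
    · push_cast
      rw [div_le_iff₀ hbq]
      exact_mod_cast hup
  · rw [if_neg hj]
    congr 1
    push_cast
    field_simp
    ring

set_option maxHeartbeats 2000000 in
/-- under the 01-hypothesis (`A/B`, `S/T` Farey neighbors with
`0 ≤ A/B < S/T ≤ 1`, `P/Q` their mediant, `n ≥ 1`, `S_n/T_n = ((n-1)P+S)/((n-1)Q+T)`,
and `P/Q < a/b < S_n/T_n` reduced), the 01-digit sequence of the broken line
`BL(P/Q, a/b, n)` is purely periodic with minimal period exactly `b` and is Sturmian. -/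
theorem broken_line_periodic_sturmian
    (A B S T P Q Sn Tn n a b : ℕ)
    (hB : 0 < B) (hT : 0 < T) (hST1 : S ≤ T)
    (hFarey : B * S = A * T + 1)
    (hn : 1 ≤ n)
    (hP : P = A + S) (hQ : Q = B + T)
    (hSn : Sn = (n - 1) * P + S) (hTn : Tn = (n - 1) * Q + T)
    (hb : 0 < b) (hab : Nat.Coprime a b)
    (h1 : (P : ℚ) / Q < (a : ℚ) / b) (h2 : (a : ℚ) / b < (Sn : ℚ) / Tn)
    :
    (∀ j : ℕ, 1 ≤ j →
      gammaBL ((P : ℚ) / Q) ((a : ℚ) / b) (n * Q) (j + b) =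
        gammaBL ((P : ℚ) / Q) ((a : ℚ) / b) (n * Q) j) ∧
    (∀ k : ℕ, 0 < k → k < b → ∃ j : ℕ, 1 ≤ j ∧
      gammaBL ((P : ℚ) / Q) ((a : ℚ) / b) (n * Q) (j + k) ≠
        gammaBL ((P : ℚ) / Q) ((a : ℚ) / b) (n * Q) j) ∧
    (∀ i j m : ℕ, 1 ≤ i → 1 ≤ j →
      |(∑ t ∈ Finset.range m, gammaBL ((P : ℚ) / Q) ((a : ℚ) / b) (n * Q) (i + t)) -
        ∑ t ∈ Finset.range m, gammaBL ((P : ℚ) / Q) ((a : ℚ) / b) (n * Q) (j + t)| ≤ 1) := by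
  have hbZ : (0:ℤ) < (b:ℤ) := by exact_mod_cast hb
  have hbq : ((b:ℚ)) ≠ 0 := by positivity
  set C : ℤ := (b:ℤ)*((n:ℤ)*(P:ℤ)) - (a:ℤ)*((n:ℤ)*(Q:ℤ)) with hC
  set F : ℕ → ℤ := fun j => ⌈(((a:ℤ)*(j:ℤ) + C : ℤ) : ℚ)/(b:ℚ)⌉ with hF
  have hGF : ∀ j : ℕ, ⌈BLfun ((P:ℚ)/Q) ((a:ℚ)/b) (n*Q) (j:ℚ)⌉ = F j := by
    intro j
    have := ceil_BL A B S T P Q Sn Tn n a b hT hFarey hn hP hQ hSn hTn hb h1 h2 j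
    simp only [hF, hC]
    exact_mod_cast this
  have hgamma : ∀ j : ℕ, gammaBL ((P:ℚ)/Q) ((a:ℚ)/b) (n*Q) j = F (j+1) - F j := by
    intro j
    unfold gammaBL
    rw [show ((j:ℚ)+1) = (((j+1:ℕ)):ℚ) by push_cast; ring, hGF, hGF]
  have hFb : ∀ j : ℕ, F (j + b) = F j + a := by
    intro j
    show (⌈(((a:ℤ)*((j+b : ℕ):ℤ) + C : ℤ) : ℚ)/(b:ℚ)⌉ : ℤ) = ⌈(((a:ℤ)*(j:ℤ) + C : ℤ) : ℚ)/(b:ℚ)⌉ + (a:ℤ)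
    rw [← Int.ceil_add_intCast]
    congr 1
    push_cast
    field_simp
    ring
  refine ⟨?_, ?_, ?_⟩
  · intro j hj
    rw [hgamma, hgamma, show j + b + 1 = (j+1) + b by omega, hFb, hFb]
    ring
  · -- minimality
    intro k hk0 hkb
    by_contra hcon
    push_neg at hcon
    have hcon' : ∀ j : ℕ, 1 ≤ j → F (j+k+1) - F (j+k) = F (j+1) - F j := by
      intro j hj
      have := hcon j hj
      rw [hgamma, hgamma] at this
      linarith [this]
    have hD : ∀ j : ℕ, 1 ≤ j → F (j + k) - F j = F (1 + k) - F 1 := by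
      intro j hj
      induction j with
      | zero => omega
      | succ i ih =>
        rcases Nat.lt_or_ge i 1 with hi | hi
        · have : i = 0 := by omega
          subst this; rfl
        · have h' := hcon' i hi
          have h'' := ih hi
          rw [show i + 1 + k = i + k + 1 by omega]
          linarith
    -- Bezout
    have hgcd : Int.gcd (a:ℤ) (b:ℤ) = 1 := by
      rw [Int.gcd_natCast_natCast]; exact hab
    obtain ⟨u, v, huv⟩ : ∃ u v : ℤ, (a:ℤ)*u + (b:ℤ)*v = 1 := by
      refine ⟨Int.gcdA a b, Int.gcdB a b, ?_⟩
      have := Int.gcd_eq_gcd_ab (a:ℤ) (b:ℤ)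
      rw [hgcd] at this
      exact_mod_cast this.symm
    -- e and K
    set K : ℤ := ((a:ℤ)*(k:ℤ)) / (b:ℤ) with hK
    set e : ℤ := ((a:ℤ)*(k:ℤ)) % (b:ℤ) with he
    have hke : (a:ℤ)*(k:ℤ) = (b:ℤ)*K + e := by
      rw [hK, he]; exact (Int.mul_ediv_add_emod _ _).symm
    have he0 : 0 ≤ e := Int.emod_nonneg _ (by exact_mod_cast hb.ne')
    have heb : e < (b:ℤ) := Int.emod_lt_of_pos _ hbZ
    have hene : e ≠ 0 := by
      intro h0
      have hdvd : (b:ℤ) ∣ (a:ℤ)*(k:ℤ) := by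
        refine Dvd.intro K ?_
        rw [hke, h0]; ring
      have hdvdN : b ∣ a * k := by exact_mod_cast hdvd
      have : b ∣ k := (Nat.Coprime.dvd_of_dvd_mul_left (Nat.Coprime.symm hab) hdvdN)
      have := Nat.le_of_dvd hk0 this
      omega
    have he1 : 1 ≤ e := by omega
    -- j1 : residue 0
    set t1 : ℤ := (-C*u - 1) % (b:ℤ) with ht1def
    set q1 : ℤ := (-C*u - 1) / (b:ℤ) with hq1def
    have ht1 : -C*u - 1 = (b:ℤ)*q1 + t1 := by
      rw [ht1def, hq1def]; exact (Int.mul_ediv_add_emod _ _).symm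
    have ht10 : 0 ≤ t1 := Int.emod_nonneg _ (by exact_mod_cast hb.ne')
    set j1 : ℕ := t1.toNat + 1 with hj1def
    have hj1Z : (j1:ℤ) = t1 + 1 := by
      rw [hj1def]; push_cast [Int.toNat_of_nonneg ht10]; ring
    set M1 : ℤ := C*v - (a:ℤ)*q1 with hM1def
    have hM1 : (a:ℤ)*(j1:ℤ) + C = (b:ℤ)*M1 := by
      rw [hj1Z, hM1def]
      have ht1' : t1 = -C*u - 1 - (b:ℤ)*q1 := by linarith
      rw [ht1']
      linear_combination (-C)*huv
    -- j2 : residue 1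
    set t2 : ℤ := ((1-C)*u - 1) % (b:ℤ) with ht2def
    set q2 : ℤ := ((1-C)*u - 1) / (b:ℤ) with hq2def
    have ht2 : (1-C)*u - 1 = (b:ℤ)*q2 + t2 := by
      rw [ht2def, hq2def]; exact (Int.mul_ediv_add_emod _ _).symm
    have ht20 : 0 ≤ t2 := Int.emod_nonneg _ (by exact_mod_cast hb.ne')
    set j2 : ℕ := t2.toNat + 1 with hj2def
    have hj2Z : (j2:ℤ) = t2 + 1 := by
      rw [hj2def]; push_cast [Int.toNat_of_nonneg ht20]; ring
    set M2 : ℤ := C*v - v - (a:ℤ)*q2 with hM2def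
    have hM2 : (a:ℤ)*(j2:ℤ) + C = (b:ℤ)*M2 + 1 := by
      rw [hj2Z, hM2def]
      have ht2' : t2 = (1-C)*u - 1 - (b:ℤ)*q2 := by linarith
      rw [ht2']
      linear_combination (1-C)*huv
    -- compute F values
    have hFj1 : F j1 = M1 := by
      simp only [hF]; exact ceil0 _ _ _ hbZ hM1
    have hFj1k : F (j1 + k) = M1 + K + 1 := by
      simp only [hF]
      refine ceilv _ _ _ e hbZ ?_ he1 (by omega)
      push_cast
      push_cast at hM1
      linarith [hke, hM1]
    have hFj2 : F j2 = M2 + 1 := by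
      simp only [hF]
      exact ceilv _ _ _ 1 hbZ (by linarith [hM2]) le_rfl (by omega)
    have hFj2k : F (j2 + k) = M2 + K + 1 := by
      simp only [hF]
      refine ceilv _ _ _ (1 + e) hbZ ?_ (by omega) (by omega)
      push_cast
      push_cast at hM2
      linarith [hke, hM2]
    have e1 := hD j1 (by omega)
    have e2 := hD j2 (by omega)
    rw [hFj1, hFj1k] at e1
    rw [hFj2, hFj2k] at e2
    linarith
  · -- balanced
    intro i j m hi hj
    have hsum : ∀ (i m : ℕ), (∑ t ∈ Finset.range m, gammaBL ((P:ℚ)/Q) ((a:ℚ)/b) (n*Q) (i + t))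
        = F (i + m) - F i := by
      intro i m
      induction m with
      | zero => simp
      | succ mm ih =>
        rw [Finset.sum_range_succ, ih, hgamma, show i + mm + 1 = i + (mm+1) by omega]
        ring
    rw [hsum, hsum]
    set d : ℚ := ((m:ℚ)*(a:ℚ))/(b:ℚ) with hd
    have hstep : ∀ i : ℕ, ⌈d⌉ - 1 ≤ F (i+m) - F i ∧ F (i+m) - F i ≤ ⌈d⌉ := by
      intro i
      set x : ℚ := (((a:ℤ)*(i:ℤ) + C : ℤ) : ℚ)/(b:ℚ) with hx
      have hxeq : F (i+m) = ⌈x + d⌉ := by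
        simp only [hF]
        congr 1
        rw [hx, hd]
        push_cast
        field_simp
        ring
      have hFi : F i = ⌈x⌉ := by simp only [hF, hx]
      rw [hxeq, hFi]
      constructor
      · have l1 : ((⌈x⌉:ℚ)) < x + 1 := Int.ceil_lt_add_one x
        have l2 : ((⌈d⌉:ℚ)) < d + 1 := Int.ceil_lt_add_one d
        have l3 : x + d ≤ ((⌈x+d⌉:ℚ)) := Int.le_ceil _
        have h4 : ⌈x⌉ + ⌈d⌉ < ⌈x+d⌉ + 2 := by
          have : ((⌈x⌉ + ⌈d⌉ : ℤ):ℚ) < ((⌈x+d⌉ + 2 : ℤ):ℚ) := by push_cast; linarith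
          exact_mod_cast this
        linarith
      · have l1 : x ≤ ((⌈x⌉:ℚ)) := Int.le_ceil x
        have l2 : d ≤ ((⌈d⌉:ℚ)) := Int.le_ceil d
        have : ⌈x + d⌉ ≤ ⌈x⌉ + ⌈d⌉ := by
          apply Int.ceil_le.mpr
          push_cast
          linarith
        linarith
    obtain ⟨a1, a2⟩ := hstep i
    obtain ⟨b1, b2⟩ := hstep j
    rw [abs_le]
    constructor <;> linarith
end

section
/- Let A/B and S/T be Farey neighbors with 0 ≤ A/B < S/T ≤ 1, let P/Q = (A+S)/(B+T) be their mediant, let n ≥ 1, and set S_n/T_n = ((n−1)P+S)/((n−1)Q+T). For m ≥ 1 let P_m/Q_m = (P + m·S_n)/(Q + m·T_n) (a reduced fraction with P/Q < P_m/Q_m < S_n/T_n). Then the 01-digit sequence of the broken line BL(P/Q, P_m/Q_m, n) is the purely periodic sequence whose period word is the block B_{n,m} = (W^{01}_{P/Q})^n · (W^{01}_{S/T} · (W^{01}_{P/Q})^{n−1})^{m−1} · W^{01}_{S/T}. -/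
/-- `n`-fold concatenation of a word with itself. -/
def wpow (w : List ℤ) (n : ℕ) : List ℤ := (List.replicate n w).flatten

/-- The block `B_{n,m}`: `B_{n,0} = W_{P/Q}` and, for `m ≥ 1`,
`B_{n,m} = W_{P/Q}^n (W_{S/T} W_{P/Q}^{n-1})^{m-1} W_{S/T}`. -/
def Blk (wP wS : List ℤ) (n m : ℕ) : List ℤ :=
  if m = 0 then wP else wpow wP n ++ wpow (wS ++ wpow wP (n - 1)) (m - 1) ++ wS

/-!
Put `S_n = (n-1)P + S`, `T_n = (n-1)Q + T`. The Farey relation `SQ - PT = 1` gives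
`Q·P_m = P·Q_m + m`, so after the hinge the broken line equals `(x·P_m - nm)/Q_m` exactly, and
before the hinge it lies above that line by `m(nQ - x)/(Q·Q_m)`, too little to change a ceiling.
Hence the ceilings of the broken line are those of the single line `x ↦ (x·P_m - nm)/Q_m`, which
are periodic with period `Q_m`. On the consecutive segments of lengths `Q` (`n` times), then
`T` and `(n-1)Q` (`m-1` times), then `T`, that line has, up to an additive constant, the ceilings
of the lines of slope `P/Q` and `S/T`; this is what the block records.
-/

noncomputable def ceilDiv (a b : ℤ) : ℤ := ⌈(a : ℚ) / b⌉

theorem ceilDiv_eq_iff {a b c : ℤ} (hb : 0 < b) :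
    ceilDiv a b = c ↔ b * (c - 1) < a ∧ a ≤ b * c := by
  have hb' : (0 : ℚ) < b := by exact_mod_cast hb
  rw [ceilDiv, Int.ceil_eq_iff, lt_div_iff₀ hb', div_le_iff₀ hb', mul_comm _ (b : ℚ),
    mul_comm (c : ℚ)]
  norm_cast

theorem ceilDiv_spec (a : ℤ) {b : ℤ} (hb : 0 < b) :
    b * (ceilDiv a b - 1) < a ∧ a ≤ b * ceilDiv a b :=
  (ceilDiv_eq_iff hb).1 rfl

theorem ceilDiv_add_mul (a k : ℤ) {b : ℤ} (hb : 0 < b) :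
    ceilDiv (a + k * b) b = ceilDiv a b + k := by
  obtain ⟨h₁, h₂⟩ := ceilDiv_spec a hb
  rw [ceilDiv_eq_iff hb]
  constructor <;> linarith [mul_comm b k]

theorem ceilDiv_eq_ceilDiv_of_mul_eq_sub {N w u v θ : ℤ} (hv : 0 < v) (hw : 0 < w)
    (h : v * N = u * w - θ) (hθ₀ : 0 ≤ θ) (hθ : θ < w * (u - v * (ceilDiv u v - 1))) :
    ceilDiv N w = ceilDiv u v := by
  obtain ⟨-, h₂⟩ := ceilDiv_spec u hv
  rw [ceilDiv_eq_iff hw]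
  constructor <;> nlinarith

theorem ceilDiv_eq_ceilDiv_of_farey {p q s t : ℤ} (ht : 0 < t) (htq : t < q)
    (hst : s * q - p * t = 1) : ceilDiv s t = ceilDiv p q := by
  obtain ⟨h₁, h₂⟩ := ceilDiv_spec s ht
  symm
  rw [ceilDiv_eq_iff (ht.trans htq)]
  constructor <;> nlinarith

def diffWord (c : ℤ → ℤ) (a : ℤ) (L : ℕ) : List ℤ :=
  (List.range L).map fun i : ℕ => c (a + i + 1) - c (a + i)

section DiffWord

variable {c d : ℤ → ℤ} {a b K : ℤ} {L : ℕ}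

@[simp]
theorem diffWord_length : (diffWord c a L).length = L := by simp [diffWord]

theorem diffWord_getD {i : ℕ} (hi : i < L) :
    (diffWord c a L).getD i 0 = c (a + i + 1) - c (a + i) := by
  simp [diffWord, hi]

theorem diffWord_add (L₁ L₂ : ℕ) :
    diffWord c a (L₁ + L₂) = diffWord c a L₁ ++ diffWord c (a + L₁) L₂ := by
  simp only [diffWord, List.range_add, List.map_append, List.map_map]
  congr 2
  funext i
  simp only [Function.comp_apply, Nat.cast_add]
  ring_nf

theorem diffWord_congr (h : ∀ i ≤ L, c (a + i) = K + d (b + i)) :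
    diffWord c a L = diffWord d b L := by
  refine List.map_congr_left fun i hi => ?_
  have hi := List.mem_range.1 hi
  have h₁ := h (i + 1) hi
  push_cast at h₁
  rw [← add_assoc, ← add_assoc] at h₁
  rw [h₁, h i hi.le]
  ring

theorem diffWord_mul_eq_wpow {w : List ℤ} (k : ℕ) (h : ∀ j < k, diffWord c (a + j * L) L = w) :
    diffWord c a (k * L) = wpow w k := by
  induction k with
  | zero => simp [diffWord, wpow]
  | succ k ih =>
    rw [Nat.succ_mul, diffWord_add, ih fun j hj => h j (by omega), Nat.cast_mul, h k (by omega)]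
    simp [wpow, List.replicate_succ']

theorem diffWord_mul_eq_wpow_of_periodic (h : ∀ x (j : ℕ), c (x + j * L) = c x + j * K)
    (k : ℕ) : diffWord c a (k * L) = wpow (diffWord c a L) k :=
  diffWord_mul_eq_wpow k fun j _ => diffWord_congr fun i _ => by rw [add_right_comm, h, add_comm]

theorem diffWord_getD_mod (hL : 0 < L) (h : ∀ x (j : ℕ), c (x + j * L) = c x + j * K)
    (i : ℕ) : (diffWord c a L).getD (i % L) 0 = c (a + i + 1) - c (a + i) := by
  rw [diffWord_getD (Nat.mod_lt _ hL)]
  conv_rhs => rw [← Nat.mod_add_div' i L]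
  rw [Nat.cast_add, Nat.cast_mul, ← add_assoc, add_right_comm (a + _) _ 1, h, h]
  ring

end DiffWord

theorem word01_eq_diffWord (P Q L : ℕ) :
    word01 ((P : ℚ) / Q) L = diffWord (fun x => ceilDiv (x * P) Q) 1 L := by
  unfold word01 diffWord
  refine List.map_congr_left fun i _ => ?_
  simp only [alpha01, ceilDiv]
  push_cast
  ring_nf

section Mediant

variable (p q s t n m : ℤ)

-- `P_m = P + m S_n` and `Q_m = Q + m T_n` in the notation of the statement.
def mediantNum : ℤ := p + m * ((n - 1) * p + s)

def mediantDen : ℤ := q + m * ((n - 1) * q + t)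

noncomputable def shiftedCeil (x : ℤ) : ℤ :=
  ceilDiv (x * mediantNum p s n m - n * m) (mediantDen q t n m)

variable {p q s t n m}

theorem mediantDen_pos (ht : 0 < t) (htq : t < q) (hn : 1 ≤ n) (hm : 1 ≤ m) :
    0 < mediantDen q t n m := by
  unfold mediantDen
  nlinarith [mul_nonneg (sub_nonneg.2 hn) (ht.trans htq).le]

theorem shiftedCeil_add_mul (ht : 0 < t) (htq : t < q) (hn : 1 ≤ n) (hm : 1 ≤ m) (x k : ℤ) :
    shiftedCeil p q s t n m (x + k * mediantDen q t n m) =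
      shiftedCeil p q s t n m x + k * mediantNum p s n m := by
  rw [shiftedCeil, shiftedCeil, ← ceilDiv_add_mul _ _ (mediantDen_pos ht htq hn hm)]
  ring_nf

theorem exists_lt_add_mul_eq_ceilDiv_sub_mul (ht : 0 < t) (htq : t < q)
    (hst : s * q - p * t = 1) {k : ℤ} (hk : 0 ≤ k) :
    ∃ e < t, k + q * e = (q * ceilDiv (k * p) q - k * p) * t := by
  obtain ⟨h₁, -⟩ := ceilDiv_spec (k * p) (ht.trans htq)
  refine ⟨ceilDiv (k * p) q * t - k * s, ?_, by linear_combination (-k) * hst⟩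
  nlinarith

theorem shiftedCeil_S_segment (ht : 0 < t) (htq : t < q) (hn : 1 ≤ n) (hm : 1 ≤ m)
    (hst : s * q - p * t = 1) {a t' : ℤ} (ha₀ : 0 ≤ a) (ha : a ≤ m - 1) (ht'₀ : 0 ≤ t')
    (ht' : t' ≤ t + 1) :
    shiftedCeil p q s t n m (n * q + a * ((n - 1) * q + t) + t') =
      n * p + a * ((n - 1) * p + s) + ceilDiv (t' * s) t := by
  set C := n * p + a * ((n - 1) * p + s)
  obtain ⟨h₁, -⟩ := ceilDiv_spec (t' * s) ht
  have hmn : 0 ≤ m * (n - 1) := mul_nonneg (by linarith) (by linarith)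
  rw [add_comm C, ← ceilDiv_add_mul _ _ ht]
  apply ceilDiv_eq_ceilDiv_of_mul_eq_sub ht (mediantDen_pos ht htq hn hm)
    (θ := t' * (1 + m * (n - 1)) + a * t)
  · unfold mediantNum mediantDen
    linear_combination (n * t * m - a * t - t' * (1 + m * (n - 1))) * hst
  · positivity
  · rw [ceilDiv_add_mul _ _ ht]
    have hθ : t' * (1 + m * (n - 1)) + a * t < mediantDen q t n m := by
      unfold mediantDen
      nlinarith [mul_le_mul_of_nonneg_right (ht'.trans htq) (by linarith : (0 : ℤ) ≤ 1 + m * (n - 1)),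
        mul_le_mul_of_nonneg_right ha ht.le]
    nlinarith [mediantDen_pos ht htq hn hm]

theorem shiftedCeil_of_le (ht : 0 < t) (htq : t < q) (hn : 1 ≤ n) (hm : 1 ≤ m)
    (hst : s * q - p * t = 1) {k : ℤ} (hk₀ : 0 ≤ k) (hk : k ≤ n * q + 1) :
    shiftedCeil p q s t n m k = ceilDiv (k * p) q := by
  have hq : 0 < q := ht.trans htq
  rcases hk.lt_or_eq with hk | rfl
  · obtain ⟨h₁, h₂⟩ := ceilDiv_spec (k * p) hq
    obtain ⟨e, he, hdec⟩ := exists_lt_add_mul_eq_ceilDiv_sub_mul ht htq hst hk₀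
    set r := q * ceilDiv (k * p) q - k * p with hr
    have hrq : r ≤ q - 1 := by rw [hr]; linarith
    apply ceilDiv_eq_ceilDiv_of_mul_eq_sub hq (mediantDen_pos ht htq hn hm) (θ := m * (n * q - k))
    · unfold mediantNum mediantDen
      linear_combination k * m * hst
    · nlinarith
    · have hgap : mediantDen q t n m * (q - r) - m * (n * q - k) =
          q * ((q - r) + m * ((q - r - 1) * (n - 1) + (t - 1 - e))) := by
        unfold mediantDen
        linear_combination m * hdec
      have : 0 ≤ (q - r - 1) * (n - 1) := mul_nonneg (by linarith) (by linarith)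
      have : 0 < q * ((q - r) + m * ((q - r - 1) * (n - 1) + (t - 1 - e))) :=
        mul_pos hq (by nlinarith)
      rw [show k * p - q * (ceilDiv (k * p) q - 1) = q - r by ring]
      linarith
  · have hb := shiftedCeil_S_segment ht htq hn hm hst (a := 0) le_rfl (by linarith) zero_le_one
      (by linarith)
    rw [zero_mul, add_zero, zero_mul, add_zero, one_mul] at hb
    rw [hb, show (n * q + 1) * p = p + n * p * q by ring, ceilDiv_add_mul _ _ hq,
      ceilDiv_eq_ceilDiv_of_farey ht htq hst]
    ring

theorem shiftedCeil_P_segment (ht : 0 < t) (htq : t < q) (hn : 1 ≤ n) (hm : 1 ≤ m)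
    (hst : s * q - p * t = 1) {a k : ℤ} (ha₀ : 0 ≤ a) (ha : a ≤ m - 2) (hk₀ : 0 ≤ k)
    (hk : k ≤ (n - 1) * q + 1) :
    shiftedCeil p q s t n m (n * q + a * ((n - 1) * q + t) + t + k) =
      n * p + a * ((n - 1) * p + s) + s + ceilDiv (k * p) q := by
  have hq : 0 < q := ht.trans htq
  set C := n * p + a * ((n - 1) * p + s) + s
  rcases hk.lt_or_eq with hk | rfl
  · obtain ⟨h₁, h₂⟩ := ceilDiv_spec (k * p) hq
    obtain ⟨e, he, hdec⟩ := exists_lt_add_mul_eq_ceilDiv_sub_mul ht htq hst hk₀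
    set r := q * ceilDiv (k * p) q - k * p with hr
    have hrq : r ≤ q - 1 := by rw [hr]; linarith
    rw [add_comm C, ← ceilDiv_add_mul _ _ hq]
    apply ceilDiv_eq_ceilDiv_of_mul_eq_sub hq (mediantDen_pos ht htq hn hm)
      (θ := (a + 1 + m * (n - 1)) * q - k * m)
    · unfold mediantNum mediantDen
      linear_combination (n * q * m - a * q - q * (1 + m * (n - 1)) + k * m) * hst
    · nlinarith
    · rw [ceilDiv_add_mul _ _ hq]
      have hgap : mediantDen q t n m * (q - r) - ((a + 1 + m * (n - 1)) * q - k * m) =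
          q * ((q - r) + m * (n - 1) * (q - r - 1) - (a + 1) + m * (t - e)) := by
        unfold mediantDen
        linear_combination m * hdec
      have : 0 ≤ m * (n - 1) * (q - r - 1) :=
        mul_nonneg (mul_nonneg (by linarith) (by linarith)) (by linarith)
      have : 0 < q * ((q - r) + m * (n - 1) * (q - r - 1) - (a + 1) + m * (t - e)) :=
        mul_pos hq (by nlinarith)
      rw [show k * p + C * q - q * (ceilDiv (k * p) q + C - 1) = q - r by ring]
      linarith
  · have hb := shiftedCeil_S_segment ht htq hn hm hst (a := a + 1) (by linarith) (by linarith)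
      zero_le_one (by linarith)
    rw [one_mul] at hb
    rw [show n * q + a * ((n - 1) * q + t) + t + ((n - 1) * q + 1) =
      n * q + (a + 1) * ((n - 1) * q + t) + 1 by ring, hb,
      ceilDiv_eq_ceilDiv_of_farey ht htq hst,
      show ((n - 1) * q + 1) * p = p + (n - 1) * p * q by ring, ceilDiv_add_mul _ _ hq]
    ring

end Mediant

theorem blk_eq_diffWord {P Q S T n m : ℕ} (hT : 0 < T) (hTQ : T < Q) (hn : 1 ≤ n) (hm : 1 ≤ m)
    (hst : (S : ℤ) * Q - P * T = 1) :
    Blk (word01 ((P : ℚ) / Q) Q) (word01 ((S : ℚ) / T) T) n m =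
      diffWord (shiftedCeil P Q S T n m) 1 (n * Q + (m - 1) * ((n - 1) * Q + T) + T) := by
  have hT' : (0 : ℤ) < T := by exact_mod_cast hT
  have hTQ' : (T : ℤ) < Q := by exact_mod_cast hTQ
  have hn' : (1 : ℤ) ≤ n := by exact_mod_cast hn
  have hm' : (1 : ℤ) ≤ m := by exact_mod_cast hm
  have hP : ∀ x (j : ℕ), ceilDiv ((x + j * Q) * P) Q = ceilDiv (x * P) Q + j * P := fun x j => by
    rw [← ceilDiv_add_mul _ _ (hT'.trans hTQ')]
    ring_nf
  rw [Blk, if_neg (by omega), word01_eq_diffWord, word01_eq_diffWord, diffWord_add, diffWord_add,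
    ← diffWord_mul_eq_wpow_of_periodic hP]
  symm
  congr 1
  congr 1
  · refine diffWord_congr (K := 0) fun i hi => ?_
    rw [zero_add, shiftedCeil_of_le hT' hTQ' hn' hm' hst (by positivity)]
    exact_mod_cast (by omega : 1 + i ≤ n * Q + 1)
  · refine diffWord_mul_eq_wpow _ fun a ha => ?_
    rw [add_comm _ T, diffWord_add, ← diffWord_mul_eq_wpow_of_periodic hP]
    congr 1
    · refine diffWord_congr (K := n * P + a * ((n - 1) * P + S)) fun i hi => ?_
      convert shiftedCeil_S_segment hT' hTQ' hn' hm' hst (a := a) (t' := 1 + i) (by positivity)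
        (by omega) (by positivity) (by omega) using 2
      push_cast [Nat.cast_sub hn]
      ring
    · refine diffWord_congr (K := n * P + a * ((n - 1) * P + S) + S) fun i hi => ?_
      convert shiftedCeil_P_segment hT' hTQ' hn' hm' hst (a := a) (k := 1 + i) (by positivity)
        (by omega) (by positivity) (by zify [hn] at hi; linarith) using 2
      push_cast [Nat.cast_sub hn]
      ring
  · refine diffWord_congr (K := n * P + (m - 1) * ((n - 1) * P + S)) fun i hi => ?_
    convert shiftedCeil_S_segment hT' hTQ' hn' hm' hst (a := m - 1) (t' := 1 + i) (by omega)
      le_rfl (by positivity) (by omega) using 2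
    push_cast [Nat.cast_sub hn, Nat.cast_sub hm]
    ring

theorem ceil_BLfun_eq_shiftedCeil {P Q S T n m : ℕ} (hT : 0 < T) (hTQ : T < Q) (hn : 1 ≤ n)
    (hm : 1 ≤ m) (hst : (S : ℤ) * Q - P * T = 1) (x : ℕ) :
    ⌈BLfun ((P : ℚ) / Q) ((mediantNum P S n m : ℚ) / mediantDen Q T n m) (n * Q) x⌉ =
      shiftedCeil P Q S T n m x := by
  have hT' : (0 : ℤ) < T := by exact_mod_cast hT
  have hTQ' : (T : ℤ) < Q := by exact_mod_cast hTQ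
  have hn' : (1 : ℤ) ≤ n := by exact_mod_cast hn
  have hm' : (1 : ℤ) ≤ m := by exact_mod_cast hm
  have hQ : (Q : ℚ) ≠ 0 := by exact_mod_cast (hT.trans hTQ).ne'
  have hden : (mediantDen Q T n m : ℚ) ≠ 0 := by
    exact_mod_cast (mediantDen_pos hT' hTQ' hn' hm').ne'
  have hstQ : (S : ℚ) * Q - P * T = 1 := by exact_mod_cast hst
  unfold BLfun
  split_ifs with hx
  · have hx : (x : ℤ) ≤ n * Q + 1 := by
      have : x ≤ n * Q := by exact_mod_cast hx
      exact_mod_cast this.trans (Nat.le_succ _)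
    rw [shiftedCeil_of_le hT' hTQ' hn' hm' hst (by positivity) hx, ceilDiv]
    push_cast
    ring_nf
  · rw [shiftedCeil, ceilDiv]
    congr 1
    field_simp
    unfold mediantNum mediantDen
    push_cast
    linear_combination (-n * m * Q) * hstQ

theorem lt_and_farey_of_mediant {A B S T P Q : ℕ} (hFarey : B * S = A * T + 1) (hP : P = A + S)
    (hQ : Q = B + T) : T < Q ∧ (S : ℤ) * Q - P * T = 1 := by
  subst hP hQ
  refine ⟨?_, ?_⟩
  · have : B ≠ 0 := by rintro rfl; simp at hFarey
    omega
  · push_cast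
    linear_combination (by exact_mod_cast hFarey : (B : ℤ) * S = A * T + 1)

theorem broken_line_PmQm_block_general
    (A B S T P Q Sn Tn n m Pm Qm : ℕ)
    (hT : 0 < T)
    (hFarey : B * S = A * T + 1)
    (hn : 1 ≤ n) (hm : 1 ≤ m)
    (hP : P = A + S) (hQ : Q = B + T)
    (hSn : Sn = (n - 1) * P + S) (hTn : Tn = (n - 1) * Q + T)
    (hPm : Pm = P + m * Sn) (hQm : Qm = Q + m * Tn) :
    ∀ j : ℕ, 1 ≤ j →
      gammaBL ((P : ℚ) / Q) ((Pm : ℚ) / Qm) (n * Q) j =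
        (Blk (word01 ((P : ℚ) / Q) Q) (word01 ((S : ℚ) / T) T) n m).getD
          ((j - 1) % (Blk (word01 ((P : ℚ) / Q) Q) (word01 ((S : ℚ) / T) T) n m).length) 0 := by
  rintro j hj
  obtain ⟨hTQ, hst⟩ := lt_and_farey_of_mediant hFarey hP hQ
  have hPm' : (Pm : ℚ) = (mediantNum P S n m : ℤ) := by
    rw [hPm, hSn, mediantNum]; push_cast [Nat.cast_sub hn]; ring
  have hQm' : (Qm : ℤ) = mediantDen Q T n m := by
    rw [hQm, hTn, mediantDen]; push_cast [Nat.cast_sub hn]; ring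
  have hlen : n * Q + (m - 1) * ((n - 1) * Q + T) + T = Qm := by
    zify [hn, hm] at hQm' ⊢
    rw [hQm', mediantDen]
    ring
  have hper (x : ℤ) (k : ℕ) : shiftedCeil P Q S T n m (x + k * Qm) =
      shiftedCeil P Q S T n m x + k * mediantNum P S n m := by
    rw [hQm']
    exact shiftedCeil_add_mul (by exact_mod_cast hT) (by exact_mod_cast hTQ)
      (by exact_mod_cast hn) (by exact_mod_cast hm) x k
  have hQmQ : (Qm : ℚ) = (mediantDen Q T n m : ℤ) := by exact_mod_cast hQm'
  obtain ⟨i, rfl⟩ : ∃ i, j = i + 1 := ⟨j - 1, by omega⟩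
  rw [blk_eq_diffWord hT hTQ hn hm hst, hlen, diffWord_length,
    diffWord_getD_mod (by omega) hper, gammaBL, hPm', hQmQ,
    ← Nat.cast_succ, ceil_BLfun_eq_shiftedCeil hT hTQ hn hm hst,
    ceil_BLfun_eq_shiftedCeil hT hTQ hn hm hst]
  push_cast
  ring_nf

/-- with `A/B < S/T` Farey neighbors, `P/Q` their mediant, `n ≥ 1`,
`S_n/T_n = ((n-1)P+S)/((n-1)Q+T)` and `P_m/Q_m = (P+mS_n)/(Q+mT_n)` for `m ≥ 1`,
the 01-digit sequence of `BL(P/Q, P_m/Q_m, n)` is purely periodic with period word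
`B_{n,m} = (W^{01}_{P/Q})^n ((W^{01}_{S/T})(W^{01}_{P/Q})^{n-1})^{m-1} W^{01}_{S/T}`. -/
theorem broken_line_PmQm_block
    (A B S T P Q Sn Tn n m Pm Qm : ℕ)
    (hB : 0 < B) (hT : 0 < T) (hST1 : S ≤ T)
    (hFarey : B * S = A * T + 1)
    (hn : 1 ≤ n) (hm : 1 ≤ m)
    (hP : P = A + S) (hQ : Q = B + T)
    (hSn : Sn = (n - 1) * P + S) (hTn : Tn = (n - 1) * Q + T)
    (hPm : Pm = P + m * Sn) (hQm : Qm = Q + m * Tn) :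
    ∀ j : ℕ, 1 ≤ j →
      gammaBL ((P : ℚ) / Q) ((Pm : ℚ) / Qm) (n * Q) j =
        (Blk (word01 ((P : ℚ) / Q) Q) (word01 ((S : ℚ) / T) T) n m).getD
          ((j - 1) % (Blk (word01 ((P : ℚ) / Q) Q) (word01 ((S : ℚ) / T) T) n m).length) 0 :=
  broken_line_PmQm_block_general A B S T P Q Sn Tn n m Pm Qm hT hFarey hn hm hP hQ hSn hTn hPm hQm
end

section
/- Let A/B and S/T be Farey neighbors with 0 ≤ A/B < S/T ≤ 1, P/Q = (A+S)/(B+T) their mediant, n ≥ 1, and S_n/T_n = ((n−1)P+S)/((n−1)Q+T). Let a/b and c/d be Farey neighbors with P/Q ≤ a/b < c/d < S_n/T_n and let f/g = (a+c)/(b+d) be their mediant. If the 01-digit sequence of BL(P/Q, a/b, n) is purely periodic with period word α_1⋯α_b and that of BL(P/Q, c/d, n) is purely periodic with period word β_1⋯β_d, then the 01-digit sequence of BL(P/Q, f/g, n) is purely periodic with period word β_1⋯β_d·α_1⋯α_b. -/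
theorem ceil_div_eq_ceil_div {p q r s : ℤ} (hq : 0 < q) (hs : 0 < s)
    (hle : p * s ≤ r * q) (hgap : r * q < p * s + q) :
    ⌈(p : ℚ) / q⌉ = ⌈(r : ℚ) / s⌉ := by
  have hq' : (0 : ℚ) < q := by exact_mod_cast hq
  have hs' : (0 : ℚ) < s := by exact_mod_cast hs
  refine le_antisymm (Int.ceil_le_ceil ?_) (Int.ceil_le.mpr ?_)
  · rw [div_le_div_iff₀ hq' hs']
    exact_mod_cast hle
  · have hpm := Int.le_ceil ((p : ℚ) / q)
    rw [div_le_iff₀ hq'] at hpm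
    generalize ⌈(p : ℚ) / q⌉ = m at hpm ⊢
    replace hpm : p ≤ m * q := by exact_mod_cast hpm
    -- an integer `m` with `m * s < r` would leave a gap of at least `q` between `r * q` and `p * s`
    have hrm : r ≤ m * s := by
      by_contra! hlt
      nlinarith [mul_le_mul_of_nonneg_left (show m * s + 1 ≤ r by omega) hq.le,
        mul_le_mul_of_nonneg_left hpm hs.le]
    rw [div_le_iff₀ hs']
    exact_mod_cast hrm

theorem alpha01_periodic {r : ℚ} {v : ℕ} {z : ℤ} (hz : (v : ℚ) * r = z) :
    Function.Periodic (alpha01 r) v := by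
  intro k
  simp only [alpha01]
  push_cast
  rw [show ((k : ℚ) + v + 1) * r = (k + 1) * r + z by rw [← hz]; ring,
    show ((k : ℚ) + v) * r = k * r + z by rw [← hz]; ring,
    Int.ceil_add_intCast, Int.ceil_add_intCast]
  ring

section Mediant

variable {a b c d : ℕ}

theorem ceil_mul_mediant_of_le (hb : 0 < b) (hd : 0 < d) (hF : b * c = a * d + 1) {k : ℕ}
    (hk : k ≤ d) : ⌈(k : ℚ) * ((a + c) / (b + d))⌉ = ⌈(k : ℚ) * (c / d)⌉ := by
  have key := ceil_div_eq_ceil_div (p := k * (a + c)) (q := b + d) (r := k * c) (s := d)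
    (by omega) (by omega) (by zify at hF; nlinarith) (by zify at hF hk; nlinarith)
  push_cast at key
  rwa [mul_div_assoc, mul_div_assoc] at key

theorem ceil_add_mul_mediant_of_le (hb : 0 < b) (hd : 0 < d) (hF : b * c = a * d + 1) {t : ℕ}
    (ht : t ≤ b) : ⌈((d : ℚ) + t) * ((a + c) / (b + d))⌉ = c + ⌈(t : ℚ) * (a / b)⌉ := by
  have key := ceil_div_eq_ceil_div (p := (d + t) * (a + c)) (q := b + d) (r := c * b + t * a)
    (s := b) (by omega) (by omega) (by zify at hF ht; nlinarith) (by zify at hF; nlinarith)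
  have hb' : (b : ℚ) ≠ 0 := by positivity
  push_cast at key
  rw [← mul_div_assoc, key, add_comm (c : ℤ), ← Int.ceil_add_natCast]
  congr 1
  field_simp
  ring

theorem alpha01_mediant_of_lt (hb : 0 < b) (hd : 0 < d) (hF : b * c = a * d + 1) {k : ℕ}
    (hk : k < d) : alpha01 ((a + c) / (b + d)) k = alpha01 (c / d) k := by
  have hsucc := ceil_mul_mediant_of_le hb hd hF (k := k + 1) hk
  push_cast at hsucc
  rw [alpha01, alpha01, hsucc, ceil_mul_mediant_of_le hb hd hF hk.le]

theorem alpha01_mediant_add_of_lt (hb : 0 < b) (hd : 0 < d) (hF : b * c = a * d + 1) {t : ℕ}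
    (ht : t < b) : alpha01 ((a + c) / (b + d)) (d + t) = alpha01 (a / b) t := by
  have hsucc := ceil_add_mul_mediant_of_le hb hd hF (t := t + 1) ht
  push_cast at hsucc
  simp only [alpha01]
  push_cast
  rw [add_assoc, hsucc, ceil_add_mul_mediant_of_le hb hd hF ht.le]
  ring

end Mediant

section BrokenLine

variable {r s : ℚ} {h j : ℕ} {z : ℤ}

theorem gammaBL_of_lt (hj : j < h) : gammaBL r s h j = alpha01 r j := by
  have hj1 : (j : ℚ) + 1 ≤ h := by exact_mod_cast hj
  have hj0 : (j : ℚ) ≤ h := by linarith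
  simp only [gammaBL, BLfun, if_pos hj1, if_pos hj0, alpha01, mul_comm r]

theorem gammaBL_of_le (hz : r * h = z) (hj : h ≤ j) : gammaBL r s h j = alpha01 s (j - h) := by
  obtain ⟨k, rfl⟩ := Nat.exists_eq_add_of_le hj
  have hBL : ∀ x : ℚ, 0 ≤ x → BLfun r s h (h + x) = x * s + z := by
    intro x hx
    unfold BLfun
    split_ifs with hle
    · obtain rfl : x = 0 := by linarith
      simp [hz]
    · rw [hz]
      ring
  simp only [gammaBL, alpha01, Nat.add_sub_cancel_left]
  push_cast
  rw [add_assoc, hBL _ (by positivity), hBL _ (by positivity), Int.ceil_add_intCast,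
    Int.ceil_add_intCast]
  ring

theorem gammaBL_add_of_le {v : ℕ} {z' : ℤ} (hz : r * h = z) (hs : (v : ℚ) * s = z')
    (hj : h ≤ j) : gammaBL r s h (j + v) = gammaBL r s h j := by
  rw [gammaBL_of_le hz (by omega), gammaBL_of_le hz hj, Nat.sub_add_comm hj, alpha01_periodic hs]

variable {a b c d : ℕ}

theorem gammaBL_mediant_of_lt (hz : r * h = z) (hb : 0 < b) (hd : 0 < d)
    (hF : b * c = a * d + 1) (hj : j < h + d) :
    gammaBL r ((a + c) / (b + d)) h j = gammaBL r (c / d) h j := by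
  rcases lt_or_ge j h with hjh | hjh
  · rw [gammaBL_of_lt hjh, gammaBL_of_lt hjh]
  · rw [gammaBL_of_le hz hjh, gammaBL_of_le hz hjh, alpha01_mediant_of_lt hb hd hF (by omega)]

theorem gammaBL_mediant_add_of_le_of_lt (hz : r * h = z) (hb : 0 < b) (hd : 0 < d)
    (hF : b * c = a * d + 1) (hj : h ≤ j) (hjb : j < h + b) :
    gammaBL r ((a + c) / (b + d)) h (d + j) = gammaBL r (a / b) h j := by
  rw [gammaBL_of_le hz (by omega), gammaBL_of_le hz hj, Nat.add_sub_assoc hj,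
    alpha01_mediant_add_of_lt hb hd hF (by omega)]

theorem gammaBL_mediant_periodic (hz : r * h = z) (hb : 0 < b) (hd : 0 < d)
    (hF : b * c = a * d + 1)
    (hperA : ∀ j : ℕ, 1 ≤ j → gammaBL r (a / b) h (j + b) = gammaBL r (a / b) h j)
    (hperC : ∀ j : ℕ, 1 ≤ j → gammaBL r (c / d) h (j + d) = gammaBL r (c / d) h j) :
    ∀ j : ℕ, 1 ≤ j →
      gammaBL r ((a + c) / (b + d)) h (j + (b + d)) = gammaBL r ((a + c) / (b + d)) h j := by
  intro j hj
  rcases lt_or_ge j h with hjh | hjh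
  · have hA := hperA j hj
    rw [gammaBL_of_lt hjh] at hA ⊢
    rw [← hA]
    rcases lt_or_ge (j + b) h with hjb | hjb
    · rw [gammaBL_mediant_of_lt hz hb hd hF (by omega), ← add_assoc, hperC _ (by omega),
        gammaBL_of_lt hjb, gammaBL_of_lt hjb]
    · rw [show j + (b + d) = d + (j + b) by ring,
        gammaBL_mediant_add_of_le_of_lt hz hb hd hF hjb (by omega)]
  · exact gammaBL_add_of_le hz (v := b + d) (z' := a + c) (by push_cast; field_simp) hjh

end BrokenLine

theorem broken_line_mediant_concatenation_general
    (B T P Q n a b c d f g : ℕ)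
    (hB : 0 < B)
    (hn : 1 ≤ n)
    (hQ : Q = B + T)
    (hb : 0 < b) (hd : 0 < d)
    (hFarey : b * c = a * d + 1)
    (hf : f = a + c) (hg : g = b + d)
    (hperA : ∀ j : ℕ, 1 ≤ j →
      gammaBL ((P : ℚ) / Q) ((a : ℚ) / b) (n * Q) (j + b) =
        gammaBL ((P : ℚ) / Q) ((a : ℚ) / b) (n * Q) j)
    (hperC : ∀ j : ℕ, 1 ≤ j →
      gammaBL ((P : ℚ) / Q) ((c : ℚ) / d) (n * Q) (j + d) =
        gammaBL ((P : ℚ) / Q) ((c : ℚ) / d) (n * Q) j) :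
    (∀ j : ℕ, 1 ≤ j →
      gammaBL ((P : ℚ) / Q) ((f : ℚ) / g) (n * Q) (j + (b + d)) =
        gammaBL ((P : ℚ) / Q) ((f : ℚ) / g) (n * Q) j) ∧
    (∀ j : ℕ, 1 ≤ j → j ≤ d →
      gammaBL ((P : ℚ) / Q) ((f : ℚ) / g) (n * Q) j =
        gammaBL ((P : ℚ) / Q) ((c : ℚ) / d) (n * Q) j) ∧
    (∀ j : ℕ, 1 ≤ j → j ≤ b →
      gammaBL ((P : ℚ) / Q) ((f : ℚ) / g) (n * Q) (d + j) =
        gammaBL ((P : ℚ) / Q) ((a : ℚ) / b) (n * Q) j) := by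
  have hQ0 : 0 < Q := by omega
  have hhinge : 0 < n * Q := Nat.mul_pos hn hQ0
  have hz : (P : ℚ) / Q * ((n * Q : ℕ) : ℚ) = ((n * P : ℤ) : ℚ) := by
    push_cast
    field_simp
  have hmed : (f : ℚ) / g = (a + c) / (b + d) := by rw [hf, hg, Nat.cast_add, Nat.cast_add]
  rw [hmed]
  refine ⟨gammaBL_mediant_periodic hz hb hd hFarey hperA hperC,
    fun j _ hjd => gammaBL_mediant_of_lt hz hb hd hFarey (by omega), fun j hj hjb => ?_⟩
  rcases lt_or_ge j (n * Q) with hjh | hjh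
  · rw [gammaBL_mediant_of_lt hz hb hd hFarey (by omega), add_comm, hperC j hj,
      gammaBL_of_lt hjh, gammaBL_of_lt hjh]
  · exact gammaBL_mediant_add_of_le_of_lt hz hb hd hFarey hjh (by omega)

/-- with `A/B < S/T` Farey neighbors, `P/Q` their mediant, `n ≥ 1`, and
`a/b < c/d` Farey neighbors with `P/Q ≤ a/b < c/d < S_n/T_n` and mediant `f/g`, if the
01-digit sequences of `BL(P/Q,a/b,n)` and `BL(P/Q,c/d,n)` are purely periodic with
period words `α_1⋯α_b` and `β_1⋯β_d`, then the 01-digit sequence of `BL(P/Q,f/g,n)`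
is purely periodic with period word `β_1⋯β_d·α_1⋯α_b`. -/
theorem broken_line_mediant_concatenation
    (A B S T P Q Sn Tn n a b c d f g : ℕ)
    (hB : 0 < B) (hT : 0 < T) (hST1 : S ≤ T)
    (hFareyST : B * S = A * T + 1)
    (hn : 1 ≤ n)
    (hP : P = A + S) (hQ : Q = B + T)
    (hSn : Sn = (n - 1) * P + S) (hTn : Tn = (n - 1) * Q + T)
    (hb : 0 < b) (hd : 0 < d)
    (hFarey : b * c = a * d + 1)
    (hf : f = a + c) (hg : g = b + d)
    (h1 : (P : ℚ) / Q ≤ (a : ℚ) / b) (h2 : (c : ℚ) / d < (Sn : ℚ) / Tn)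
    (hperA : ∀ j : ℕ, 1 ≤ j →
      gammaBL ((P : ℚ) / Q) ((a : ℚ) / b) (n * Q) (j + b) =
        gammaBL ((P : ℚ) / Q) ((a : ℚ) / b) (n * Q) j)
    (hperC : ∀ j : ℕ, 1 ≤ j →
      gammaBL ((P : ℚ) / Q) ((c : ℚ) / d) (n * Q) (j + d) =
        gammaBL ((P : ℚ) / Q) ((c : ℚ) / d) (n * Q) j) :
    (∀ j : ℕ, 1 ≤ j →
      gammaBL ((P : ℚ) / Q) ((f : ℚ) / g) (n * Q) (j + (b + d)) =
        gammaBL ((P : ℚ) / Q) ((f : ℚ) / g) (n * Q) j) ∧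
    (∀ j : ℕ, 1 ≤ j → j ≤ d →
      gammaBL ((P : ℚ) / Q) ((f : ℚ) / g) (n * Q) j =
        gammaBL ((P : ℚ) / Q) ((c : ℚ) / d) (n * Q) j) ∧
    (∀ j : ℕ, 1 ≤ j → j ≤ b →
      gammaBL ((P : ℚ) / Q) ((f : ℚ) / g) (n * Q) (d + j) =
        gammaBL ((P : ℚ) / Q) ((a : ℚ) / b) (n * Q) j) :=
  broken_line_mediant_concatenation_general B T P Q n a b c d f g hB hn hQ hb hd hFarey hf hg hperA
    hperC
end

section
/- Let A/B and S/T be Farey neighbors with 0 ≤ A/B < S/T ≤ 1, P/Q = (A+S)/(B+T) their mediant, n ≥ 1, S_n/T_n = ((n−1)P+S)/((n−1)Q+T), and P_m/Q_m = (P + m·S_n)/(Q + m·T_n) for m ≥ 0. Let m ≥ 0 and let a/b be a reduced fraction with P_m/Q_m < a/b < P_{m+1}/Q_{m+1}. Then there exist an integer k ≥ 2 and m_1, …, m_k with m_1 = m+1, m_k = m, and m_i ∈ {m, m+1} for all i, such that the 01-digit sequence of BL(P/Q, a/b, n) is purely periodic with period word the concatenation B_{n,m_1}·B_{n,m_2}⋯B_{n,m_{k−1}}·B_{n,m_k}.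 -/

-- ===== auxiliary development =====


lemma ceil_div_eq_of (u v z : ℤ) (hv : 0 < v) (h1 : v*(z-1) < u) (h2 : u ≤ v*z) :
    ⌈(u:ℚ)/(v:ℚ)⌉ = z := by
  have hv' : (0:ℚ) < (v:ℚ) := by exact_mod_cast hv
  rw [Int.ceil_eq_iff]
  constructor
  · rw [lt_div_iff₀ hv']
    calc ((z:ℚ) - 1) * v = ((v*(z-1) : ℤ) : ℚ) := by push_cast; ring
    _ < u := by exact_mod_cast h1
  · rw [div_le_iff₀ hv']
    calc (u:ℚ) ≤ ((v*z : ℤ) : ℚ) := by exact_mod_cast h2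
    _ = z * v := by push_cast; ring

lemma floor_div_eq_of (u v z : ℤ) (hv : 0 < v) (h1 : v*z ≤ u) (h2 : u < v*(z+1)) :
    ⌊(u:ℚ)/(v:ℚ)⌋ = z := by
  have hv' : (0:ℚ) < (v:ℚ) := by exact_mod_cast hv
  rw [Int.floor_eq_iff]
  constructor
  · rw [le_div_iff₀ hv']
    calc (z:ℚ) * v = ((v*z : ℤ) : ℚ) := by push_cast; ring
    _ ≤ u := by exact_mod_cast h1
  · rw [div_lt_iff₀ hv']
    calc (u:ℚ) < ((v*(z+1) : ℤ) : ℚ) := by exact_mod_cast h2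
    _ = ((z:ℚ) + 1) * v := by push_cast; ring

lemma segP (a b P Q T M d ρ e W : ℤ)
    (hb : 0 < b) (hQ : 2 ≤ Q) (hT1 : 1 ≤ T) (hTQ : T < Q) (hP1 : 1 ≤ P) (hPQ : P < Q)
    (hPT : Q ∣ P*T + 1) (hM : a*Q = b*P + M) (hM1 : 1 ≤ M) (hTM : T*M < b) (hab : a ≤ b)
    (he : b*e = d*a + ρ) (hρ1 : M ≤ ρ) (hρ2 : ρ < W)
    (hWQ : W*Q ≤ b + M*(Q - T)) (hWa : W ≤ a + M) :
    ∀ t : ℤ, 1 ≤ t → t ≤ Q + 1 →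
      ⌈(((d + t) * a : ℤ):ℚ)/(b:ℚ)⌉ = e + ⌈((t*P : ℤ):ℚ)/(Q:ℚ)⌉ := by
  intro t ht1 ht2
  have hQ0 : (0:ℤ) < Q := by omega
  set s : ℤ := (-(t*P)) % Q with hs_def
  have hs0 : 0 ≤ s := Int.emod_nonneg _ (by omega)
  have hsQ : s < Q := Int.emod_lt_of_pos _ hQ0
  have hdvd : Q ∣ t*P + s := by
    have h := Int.emod_add_mul_ediv (-(t*P)) Q
    exact ⟨-((-(t*P))/Q), by linarith [h]⟩
  set z2 : ℤ := (t*P + s)/Q with hz2_def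
  have hz2 : Q * z2 = t*P + s := Int.mul_ediv_cancel' hdvd
  have hceil2 : ⌈((t*P : ℤ):ℚ)/(Q:ℚ)⌉ = z2 :=
    ceil_div_eq_of _ _ _ hQ0 (by linarith) (by linarith)
  -- key inequalities
  have key : 0 ≤ Q*ρ + b*s - t*M ∧ Q*ρ + b*s - t*M < Q*b := by
    by_cases hs : s = 0
    · -- then Q ∣ t, so t = Q
      have h1 : Q ∣ t*P := by
        have := hdvd; rw [hs] at this; simpa using this
      have hQt : Q ∣ t := by
        have h2 : Q ∣ t*(P*T+1) := hPT.mul_left t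
        have h3 : Q ∣ (t*P)*T := h1.mul_right T
        have h4 : t = t*(P*T+1) - (t*P)*T := by ring
        rw [h4]; exact dvd_sub h2 h3
      obtain ⟨c, hc⟩ := hQt
      have hc0 : 1 ≤ c := by
        by_contra hcon
        push_neg at hcon
        have : Q*c ≤ Q*0 := mul_le_mul_of_nonneg_left (by omega) (by omega)
        omega
      have hc2 : c ≤ 1 := by
        by_contra hcon
        push_neg at hcon
        have : Q*2 ≤ Q*c := mul_le_mul_of_nonneg_left (by omega) (by omega)
        omega
      have htQe : t = Q := by
        have : c = 1 := le_antisymm hc2 hc0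
        rw [this] at hc; omega
      rw [hs, htQe]
      have g1 : 0 ≤ Q*(ρ - M) := mul_nonneg (by omega) (by omega)
      have g2 : Q*(ρ - M) < Q*b := mul_lt_mul_of_pos_left (by linarith) hQ0
      have gr : Q*(ρ - M) = Q*ρ - Q*M := by ring
      constructor
      · linarith
      · linarith
    · by_cases ht : t = Q + 1
      · have hsv : s = Q - P := by
          have h1 : -(t*P) = (Q-P) + Q*(-(P+1)) := by rw [ht]; ring
          rw [hs_def, h1, Int.add_mul_emod_self_left]
          exact Int.emod_eq_of_lt (by omega) (by omega)
        have e3 : Q*ρ + b*s - t*M = Q*(ρ + b - a - M) := by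
          rw [hsv, ht]; linear_combination hM
        rw [e3]
        have g1 : 0 ≤ Q*(ρ + b - a - M) := mul_nonneg (by omega) (by linarith)
        have g2 : Q*(ρ + b - a - M) < Q*b := mul_lt_mul_of_pos_left (by linarith) hQ0
        exact ⟨g1, g2⟩
      · -- interior case
        have htQ : t ≠ Q := by
          intro h
          apply hs
          rw [hs_def, h]
          have h5 : -(Q*P) = Q*(-P) := by ring
          rw [h5, Int.mul_emod_right]
        have ht3 : t ≤ Q - 1 := by omega
        have hs1 : 1 ≤ s := by omega
        have hdvd2 : Q ∣ s*T - t := by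
          have h2 : Q ∣ T*(t*P + s) := hdvd.mul_left T
          have h3 : Q ∣ t*(P*T+1) := hPT.mul_left t
          have h4 : s*T - t = T*(t*P + s) - t*(P*T+1) := by ring
          rw [h4]; exact dvd_sub h2 h3
        obtain ⟨g, hg⟩ := hdvd2
        have hsT : s ≤ s*T := by nlinarith
        have hg0 : 0 ≤ g := by
          by_contra hcon
          push_neg at hcon
          have h6 : Q*g ≤ Q*(-1) := mul_le_mul_of_nonneg_left (by omega) (by omega)
          have h7 : Q*(-1) = -Q := by ring
          linarith
        have hgT : g ≤ T - 1 := by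
          by_contra hcon
          push_neg at hcon
          have h6 : Q*T ≤ Q*g := mul_le_mul_of_nonneg_left (by omega) (by omega)
          have h7 : s*T ≤ (Q-1)*T := mul_le_mul_of_nonneg_right (by omega) (by omega)
          have h8 : (Q-1)*T = Q*T - T := by ring
          linarith
        have e2 : b*s - t*M = s*(b - T*M) + M*(Q*g) := by linear_combination M*hg
        have q0 : 0 ≤ Q*ρ := mul_nonneg (by omega) (by omega)
        have q1 : 0 ≤ s*(b - T*M) := mul_nonneg (by omega) (by omega)
        have q2 : 0 ≤ M*(Q*g) := mul_nonneg (by omega) (mul_nonneg (by omega) hg0)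
        constructor
        · linarith
        · have p1 : s*(b - T*M) ≤ (Q-1)*(b - T*M) :=
            mul_le_mul_of_nonneg_right (by omega) (by omega)
          have p2 : M*(Q*g) ≤ M*(Q*(T-1)) :=
            mul_le_mul_of_nonneg_left (mul_le_mul_of_nonneg_left hgT (by omega)) (by omega)
          have p3 : Q*ρ ≤ Q*(W-1) := mul_le_mul_of_nonneg_left (by omega) (by omega)
          nlinarith [p1, p2, p3, hWQ]
  -- conclude
  have e1 : Q*(b*(e+z2)) = Q*((d+t)*a) + (Q*ρ + b*s - t*M) := by
    linear_combination Q*he + b*hz2 - t*hM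
  rw [hceil2]
  apply ceil_div_eq_of _ _ _ hb
  · have h8 : Q*(b*(e+z2-1)) < Q*((d+t)*a) := by nlinarith [key.2]
    exact lt_of_mul_lt_mul_left h8 (by omega)
  · have h9 : Q*((d+t)*a) ≤ Q*(b*(e+z2)) := by nlinarith [key.1]
    exact le_of_mul_le_mul_left h9 hQ0

lemma segS (a b S T B N d ρ e : ℤ)
    (hb : 0 < b) (hT1 : 1 ≤ T) (hB1 : 1 ≤ B) (hS1 : 1 ≤ S) (hST : S ≤ T)
    (hSB : T ∣ S*B - 1) (hN : b*S = a*T + N) (hN1 : 1 ≤ N) (hab : a ≤ b)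
    (he : b*e = d*a + ρ) (hρ0 : 0 ≤ ρ) (hρN : ρ + N < b) (hρT : ρ*T + B*N < b)
    (hρa : ρ < a - N) :
    ∀ t : ℤ, 1 ≤ t → t ≤ T + 1 →
      ⌈(((d + t) * a : ℤ):ℚ)/(b:ℚ)⌉ = e + ⌈((t*S : ℤ):ℚ)/(T:ℚ)⌉ := by
  intro t ht1 ht2
  have hT0 : (0:ℤ) < T := by omega
  set σ : ℤ := (-(t*S)) % T with hσ_def
  have hσ0 : 0 ≤ σ := Int.emod_nonneg _ (by omega)
  have hσT : σ < T := Int.emod_lt_of_pos _ hT0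
  have hdvd : T ∣ t*S + σ := by
    have h := Int.emod_add_mul_ediv (-(t*S)) T
    exact ⟨-((-(t*S))/T), by linarith [h]⟩
  set z2 : ℤ := (t*S + σ)/T with hz2_def
  have hz2 : T * z2 = t*S + σ := Int.mul_ediv_cancel' hdvd
  have hceil2 : ⌈((t*S : ℤ):ℚ)/(T:ℚ)⌉ = z2 :=
    ceil_div_eq_of _ _ _ hT0 (by linarith) (by linarith)
  have key : 0 ≤ T*ρ + b*σ + t*N ∧ T*ρ + b*σ + t*N < T*b := by
    constructor
    · have q1 : 0 ≤ T*ρ := mul_nonneg (by omega) hρ0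
      have q2 : 0 ≤ b*σ := mul_nonneg (by omega) hσ0
      have q3 : 0 ≤ t*N := mul_nonneg (by omega) (by omega)
      linarith
    · by_cases ht : t = T + 1
      · have hσv : σ = T - S := by
          have h1 : T ∣ S + σ := by
            have h2 : t*S + σ = T*S + (S + σ) := by rw [ht]; ring
            have h3 := hdvd
            rw [h2] at h3
            exact (dvd_add_right ⟨S, rfl⟩).mp h3
          obtain ⟨w, hw⟩ := h1
          have hw1 : 1 ≤ w := by
            by_contra hcon
            push_neg at hcon
            have : T*w ≤ T*0 := mul_le_mul_of_nonneg_left (by omega) (by omega)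
            omega
          have hw2 : w ≤ 1 := by
            by_contra hcon
            push_neg at hcon
            have : T*2 ≤ T*w := mul_le_mul_of_nonneg_left (by omega) (by omega)
            omega
          have : w = 1 := le_antisymm hw2 hw1
          rw [this] at hw; omega
        have e3 : T*ρ + b*σ + t*N = T*(ρ + b - a + N) := by
          rw [hσv, ht]; linear_combination -hN
        rw [e3]
        exact mul_lt_mul_of_pos_left (by linarith) hT0
      · by_cases hσz : σ = 0
        · have h1 : T ∣ t*S := by
            have := hdvd; rw [hσz] at this; simpa using this
          have hTt : T ∣ t := by
            have h2 : T ∣ (t*S)*B := h1.mul_right B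
            have h3 : T ∣ t*(S*B-1) := hSB.mul_left t
            have h4 : t = (t*S)*B - t*(S*B-1) := by ring
            rw [h4]; exact dvd_sub h2 h3
          obtain ⟨c, hc⟩ := hTt
          have hc0 : 1 ≤ c := by
            by_contra hcon
            push_neg at hcon
            have : T*c ≤ T*0 := mul_le_mul_of_nonneg_left (by omega) (by omega)
            omega
          have hc2 : c ≤ 1 := by
            by_contra hcon
            push_neg at hcon
            have : T*2 ≤ T*c := mul_le_mul_of_nonneg_left (by omega) (by omega)
            omega
          have htT : t = T := by
            have : c = 1 := le_antisymm hc2 hc0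
            rw [this] at hc; omega
          rw [hσz, htT]
          have g2 : T*(ρ + N) < T*b := mul_lt_mul_of_pos_left (by linarith) hT0
          have gr : T*(ρ + N) = T*ρ + T*N := by ring
          linarith
        · -- interior
          have htT : t ≠ T := by
            intro h
            apply hσz
            rw [hσ_def, h]
            have h5 : -(T*S) = T*(-S) := by ring
            rw [h5, Int.mul_emod_right]
          have ht3 : t ≤ T - 1 := by omega
          have hσ1 : 1 ≤ σ := by omega
          set u : ℤ := T - σ with hu_def
          have hu1 : 1 ≤ u := by omega
          have huT : u ≤ T - 1 := by omega
          have hdvd2 : T ∣ u*B - t := by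
            have h2 : T ∣ B*(t*S + σ) := hdvd.mul_left B
            have h3 : T ∣ t*(S*B-1) := hSB.mul_left t
            have h4 : u*B - t = T*B - B*(t*S + σ) + t*(S*B-1) := by rw [hu_def]; ring
            rw [h4]
            exact dvd_add (dvd_sub ⟨B, rfl⟩ h2) h3
          obtain ⟨g, hg⟩ := hdvd2
          have hg0 : 0 ≤ g := by
            by_contra hcon
            push_neg at hcon
            have h6 : T*g ≤ T*(-1) := mul_le_mul_of_nonneg_left (by omega) (by omega)
            have h7 : T*(-1) = -T := by ring
            have h8 : u ≤ u*B := by nlinarith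
            linarith
          have htu : t ≤ u*B := by
            have h6 : T*0 ≤ T*g := mul_le_mul_of_nonneg_left hg0 (by omega)
            have h7 : T*0 = 0 := by ring
            linarith
          have p1 : t*N ≤ (u*B)*N := mul_le_mul_of_nonneg_right htu (by omega)
          have hbBN : 0 < b - B*N := by nlinarith [mul_nonneg hρ0 (le_of_lt hT0)]
          have p2 : b - B*N ≤ u*(b - B*N) := by
            nlinarith [mul_nonneg (by omega : (0:ℤ) ≤ u - 1) (le_of_lt hbBN)]
          have p3 : b*σ = b*T - b*u := by rw [hu_def]; ring
          have p4 : u*(b - B*N) = u*b - u*(B*N) := by ring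
          have p5 : (u*B)*N = u*(B*N) := by ring
          have p6 : b*u = u*b := by ring
          have p7 : ρ*T = T*ρ := by ring
          linarith
  have e1 : T*(b*(e+z2)) = T*((d+t)*a) + (T*ρ + b*σ + t*N) := by
    linear_combination T*he + b*hz2 + t*hN
  rw [hceil2]
  apply ceil_div_eq_of _ _ _ hb
  · have h8 : T*(b*(e+z2-1)) < T*((d+t)*a) := by nlinarith [key.2]
    exact lt_of_mul_lt_mul_left h8 (by omega)
  · have h9 : T*((d+t)*a) ≤ T*(b*(e+z2)) := by nlinarith [key.1]
    exact le_of_mul_le_mul_left h9 hT0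

lemma lemA (a b P Q T n Tn M : ℤ) (hb : 0 < b) (hQ0 : 0 < Q) (hT1 : 1 ≤ T) (hTQ : T < Q)
    (hPT : Q ∣ P*T + 1) (hP0 : 0 ≤ P) (hM : a*Q = b*P + M) (hM1 : 1 ≤ M)
    (hTn : Tn = (n-1)*Q + T) (hn1 : 1 ≤ n) (hbn : n*M < b) (hbTn : Tn*M < b) :
    ∀ i : ℤ, 0 ≤ i → i ≤ n*Q → ⌊((i*a : ℤ):ℚ)/(b:ℚ)⌋ = ⌊((i*P:ℤ):ℚ)/(Q:ℚ)⌋ := by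
  intro i hi0 hi1
  set z : ℤ := (i*P)/Q with hz_def
  set r : ℤ := (i*P)%Q with hr_def
  have hzr : Q*z + r = i*P := Int.mul_ediv_add_emod (i*P) Q
  have hr0 : 0 ≤ r := Int.emod_nonneg _ (by omega)
  have hrQ : r < Q := Int.emod_lt_of_pos _ hQ0
  have hfl2 : ⌊((i*P:ℤ):ℚ)/(Q:ℚ)⌋ = z := floor_div_eq_of _ _ _ hQ0 (by linarith) (by linarith)
  rw [hfl2]
  apply floor_div_eq_of _ _ _ hb
  · -- b*z ≤ i*a
    have q1 : 0 ≤ i*M := mul_nonneg hi0 (by linarith)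
    have q2 : 0 ≤ b*r := mul_nonneg (by linarith) hr0
    have e6 : Q*(i*a) = Q*(b*z) + (b*r + i*M) := by linear_combination i*hM - b*hzr
    have h1 : Q*(b*z) ≤ Q*(i*a) := by linarith
    exact le_of_mul_le_mul_left h1 hQ0
  · -- i*a < b*(z+1), i.e. i*M < b*(Q-r)
    have key : i*M < b*(Q - r) := by
      by_cases hr : r = 0
      · have h2 : i*M ≤ (n*Q)*M := mul_le_mul_of_nonneg_right hi1 (by linarith)
        have h3 : (n*M)*Q < b*Q := mul_lt_mul_of_pos_right hbn hQ0
        have h4 : (n*Q)*M = (n*M)*Q := by ring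
        rw [hr]
        linarith
      · have hs1 : 1 ≤ Q - r := by omega
        have hdvd1 : Q ∣ i*P + (Q - r) := ⟨z + 1, by linarith⟩
        have hdvd2 : Q ∣ (Q-r)*T - i := by
          have h2 : Q ∣ T*(i*P + (Q-r)) := hdvd1.mul_left T
          have h3 : Q ∣ i*(P*T+1) := hPT.mul_left i
          have h4 : (Q-r)*T - i = T*(i*P + (Q-r)) - i*(P*T+1) := by ring
          rw [h4]; exact dvd_sub h2 h3
        have hine : i < n*Q := by
          rcases lt_or_eq_of_le hi1 with h | h
          · exact h
          · exfalso
            apply hr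
            rw [hr_def, h]
            have h5 : n*Q*P = (n*P)*Q := by ring
            rw [h5, Int.mul_emod_left]
        -- i = Q*q0 + r0 with q0 ≤ n-1 and r0 = (Q-r)*T % Q ≤ (Q-r)*T
        set q0 : ℤ := i / Q with hq0_def
        set r0 : ℤ := i % Q with hr0_def
        have hir : Q*q0 + r0 = i := Int.mul_ediv_add_emod i Q
        have hr00 : 0 ≤ r0 := Int.emod_nonneg _ (by omega)
        have hr0Q : r0 < Q := Int.emod_lt_of_pos _ hQ0
        have hq0n : q0 ≤ n - 1 := by
          by_contra hcon
          push_neg at hcon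
          have : Q*n ≤ Q*q0 := mul_le_mul_of_nonneg_left (by omega) (by omega)
          have h6 : Q*n = n*Q := by ring
          omega
        have hd3 : Q ∣ i - (Q-r)*T := by
          have h5 : i - (Q-r)*T = -((Q-r)*T - i) := by ring
          rw [h5]
          exact dvd_neg.mpr hdvd2
        have hmod : r0 = ((Q-r)*T) % Q := by
          rw [hr0_def]
          exact Int.emod_eq_emod_iff_emod_sub_eq_zero.mpr (Int.emod_eq_zero_of_dvd hd3)
        have hstT : r0 ≤ (Q-r)*T := by
          have hnn : 0 ≤ (Q-r)*T := mul_nonneg (by omega) (by omega)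
          have hq : 0 ≤ ((Q-r)*T)/Q := Int.ediv_nonneg hnn (by omega)
          have hqq := Int.mul_ediv_add_emod ((Q-r)*T) Q
          have : 0 ≤ Q*(((Q-r)*T)/Q) := mul_nonneg (by omega) hq
          omega
        have hile : i ≤ (Q-r)*Tn := by
          have h7 : Q*q0 ≤ Q*(n-1) := mul_le_mul_of_nonneg_left hq0n (by omega)
          have h8 : Q*(n-1) ≤ (Q-r)*((n-1)*Q) := by
            have q3 : 0 ≤ (Q - r - 1)*((n-1)*Q) :=
              mul_nonneg (by omega) (mul_nonneg (by omega) (by omega))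
            have q4 : (Q-r)*((n-1)*Q) = Q*(n-1) + (Q-r-1)*((n-1)*Q) := by ring
            linarith
          have h9 : (Q-r)*Tn = (Q-r)*((n-1)*Q) + (Q-r)*T := by rw [hTn]; ring
          linarith
        have h10 : i*M ≤ ((Q-r)*Tn)*M :=
          mul_le_mul_of_nonneg_right hile (by linarith)
        have h11 : (Q-r)*(Tn*M) < (Q-r)*b := by
          apply mul_lt_mul_of_pos_left hbTn (by omega)
        have h12 : ((Q-r)*Tn)*M = (Q-r)*(Tn*M) := by ring
        have h13 : (Q-r)*b = b*(Q-r) := by ring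
        linarith
    have e5 : Q*(b*(z+1)) = Q*(i*a) + (b*(Q-r) - i*M) := by linear_combination b*hzr - i*hM
    have h14 : Q*(i*a) < Q*(b*(z+1)) := by linarith
    exact lt_of_mul_lt_mul_left h14 (by omega)

lemma ceil_shift_int (a b z k : ℤ) (hb : 0 < b) :
    ⌈(((z + b*k)*a : ℤ):ℚ)/(b:ℚ)⌉ = ⌈((z*a:ℤ):ℚ)/(b:ℚ)⌉ + k*a := by
  have hb' : ((b:ℚ)) ≠ 0 := by exact_mod_cast hb.ne'
  have h : (((z + b*k)*a : ℤ):ℚ)/(b:ℚ) = ((z*a:ℤ):ℚ)/(b:ℚ) + ((k*a : ℤ):ℚ) := by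
    push_cast
    field_simp
  rw [h, Int.ceil_add_intCast]

def ceilN (y K i : ℕ) : ℕ := (i*y + K - 1)/K

lemma cf_low (y K i : ℕ) (hK : 1 ≤ K) : (i:ℤ)*y ≤ (K:ℤ) * ceilN y K i := by
  have h := Nat.div_add_mod (i*y + K - 1) K
  have hm := Nat.mod_lt (i*y + K - 1) (show 0 < K by omega)
  have hc : ((i*y + K - 1 : ℕ) : ℤ) = (i:ℤ)*y + K - 1 := by
    push_cast [Nat.cast_sub (show 1 ≤ i*y + K by omega)]
    ring
  have h' : (K:ℤ) * (ceilN y K i) + ((i*y + K - 1) % K : ℕ) = (i:ℤ)*y + K - 1 := by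
    rw [← hc]
    exact_mod_cast congrArg (fun x : ℕ => (x : ℤ)) h
  have hm' : (((i*y + K - 1) % K : ℕ) : ℤ) < K := by exact_mod_cast hm
  linarith

lemma cf_high (y K i : ℕ) (hK : 1 ≤ K) : (K:ℤ) * ceilN y K i ≤ (i:ℤ)*y + K - 1 := by
  have h := Nat.div_add_mod (i*y + K - 1) K
  have hc : ((i*y + K - 1 : ℕ) : ℤ) = (i:ℤ)*y + K - 1 := by
    push_cast [Nat.cast_sub (show 1 ≤ i*y + K by omega)]
    ring
  have h' : (K:ℤ) * (ceilN y K i) + ((i*y + K - 1) % K : ℕ) = (i:ℤ)*y + K - 1 := by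
    rw [← hc]
    exact_mod_cast congrArg (fun x : ℕ => (x : ℤ)) h
  have hm0 : (0:ℤ) ≤ (((i*y + K - 1) % K : ℕ) : ℤ) := by positivity
  linarith

lemma cf_mono (y K i : ℕ) : ceilN y K i ≤ ceilN y K (i+1) := by
  apply Nat.div_le_div_right
  have h : i*y ≤ (i+1)*y := Nat.mul_le_mul_right y (by omega)
  omega

lemma cf_step (y K i : ℕ) (hK : 1 ≤ K) (hyK : y + 1 ≤ K) : ceilN y K (i+1) ≤ ceilN y K i + 1 := by
  unfold ceilN
  have h1 : (i+1)*y = i*y + y := by ring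
  have h2 : (i+1)*y + K - 1 ≤ (i*y + K - 1) + K := by omega
  calc ((i+1)*y + K - 1)/K ≤ ((i*y + K - 1) + K)/K := Nat.div_le_div_right h2
  _ = (i*y + K - 1)/K + 1 := Nat.add_div_right _ (by omega)

lemma cf_zero (y K : ℕ) (hK : 1 ≤ K) : ceilN y K 0 = 0 := by
  unfold ceilN
  apply Nat.div_eq_of_lt
  omega

lemma cf_one (y K : ℕ) (hK : 1 ≤ K) (hy1 : 1 ≤ y) (hyK : y + 1 ≤ K) : ceilN y K 1 = 1 := by
  unfold ceilN
  apply Nat.div_eq_of_lt_le <;> omega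

lemma cf_K (y K : ℕ) (hK : 1 ≤ K) : ceilN y K K = y := by
  unfold ceilN
  apply Nat.div_eq_of_lt_le
  · rw [mul_comm]
    omega
  · rw [Nat.succ_mul, mul_comm K y]
    omega

lemma cf_last (y K : ℕ) (hK : 1 ≤ K) (hy1 : 1 ≤ y) (hyK : y + 1 ≤ K) :
    ceilN y K (K-1) = y := by
  unfold ceilN
  have h1 : (K-1)*y + y = K*y := by
    have h0 : K - 1 + 1 = K := by omega
    calc (K-1)*y + y = ((K-1)+1)*y := by ring
    _ = K*y := by rw [h0]
  apply Nat.div_eq_of_lt_le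
  · rw [mul_comm]
    omega
  · rw [Nat.succ_mul, mul_comm y K]
    omega

lemma cf_sharp (y K i : ℕ) (hK : 1 ≤ K) (h : ceilN y K i + 1 ≤ ceilN y K (i+1)) :
    K * ceilN y K i < (i+1)*y := by
  by_contra hcon
  push_neg at hcon
  have h1 : (i+1)*y + K - 1 ≤ K*(ceilN y K i) + K - 1 := by omega
  have h2 : ceilN y K (i+1) ≤ (K*(ceilN y K i) + K - 1)/K := Nat.div_le_div_right h1
  have h3 : (K*(ceilN y K i) + K - 1)/K = ceilN y K i := by
    apply Nat.div_eq_of_lt_le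
    · rw [mul_comm]
      omega
    · rw [Nat.succ_mul, mul_comm K (ceilN y K i)]
      omega
  omega

/-- Context bundling all numeric data (as naturals) and facts. -/
structure Ctx where
  (a b P Q S T B M K N Sn Tn n : ℕ)
  hb : 0 < b
  hQ : 2 ≤ Q
  hT1 : 1 ≤ T
  hTQ : T < Q
  hP1 : 1 ≤ P
  hPQ : P < Q
  hS1 : 1 ≤ S
  hST : S ≤ T
  hB1 : 1 ≤ B
  hPT : (Q:ℤ) ∣ (P:ℤ)*T + 1
  hSB : (T:ℤ) ∣ (S:ℤ)*B - 1
  hM : (a:ℤ)*Q = (b:ℤ)*P + M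
  hM1 : 1 ≤ M
  hN : (b:ℤ)*S = (a:ℤ)*T + N
  hN1 : 1 ≤ N
  hK : (b:ℤ)*Sn = (a:ℤ)*Tn + K
  hK2 : 2 ≤ K
  hn1 : 1 ≤ n
  hTnN : Tn = (n-1)*Q + T
  hab : a ≤ b
  hTM : (T:ℤ)*M < b
  hWQ : ((n:ℤ)*M + K)*Q ≤ (b:ℤ) + (M:ℤ)*((Q:ℤ) - T)
  hWa : (n:ℤ)*M + K ≤ (a:ℤ) + M
  hSw1 : (M:ℤ) + N ≤ b
  hSw2 : ((M:ℤ)-1)*T + (B:ℤ)*N < b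
  hSw3 : (M:ℤ) - 1 < (a:ℤ) - N
  hQP1 : (1:ℤ) ≤ (Q:ℤ) - P    -- P < Q as int convenience

namespace Ctx

noncomputable def alphaZ (a b : ℤ) (j : ℤ) : ℤ :=
  ⌈(((j+1)*a : ℤ):ℚ)/(b:ℚ)⌉ - ⌈((j*a : ℤ):ℚ)/(b:ℚ)⌉

def MatchesL (a b : ℤ) (d : ℤ) (L : ℕ) (w : List ℤ) : Prop :=
  w = (List.range L).map fun (i : ℕ) => alphaZ a b (d + (i : ℤ) + 1)

lemma matchesL_nil (a b d : ℤ) : MatchesL a b d 0 [] := by simp [MatchesL]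

lemma matchesL_append {a b d : ℤ} {L1 L2 : ℕ} {w1 w2 : List ℤ}
    (h1 : MatchesL a b d L1 w1) (h2 : MatchesL a b (d + (L1:ℤ)) L2 w2) :
    MatchesL a b d (L1 + L2) (w1 ++ w2) := by
  rw [MatchesL] at h1 h2 ⊢
  subst h1; subst h2
  rw [List.range_add, List.map_append, List.map_map]
  congr 1
  apply List.map_congr_left
  intro i _
  show alphaZ a b (d + (L1:ℤ) + (i:ℤ) + 1) = alphaZ a b (d + ((L1 + i : ℕ):ℤ) + 1)
  congr 1
  push_cast
  ring

variable (c : Ctx)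

/-- the P-word matches at a position with residue `ρ` in the P-window. -/
lemma matchesP (d ρ e : ℤ) (he : (c.b:ℤ)*e = d*(c.a:ℤ) + ρ)
    (h1 : (c.M:ℤ) ≤ ρ) (h2 : ρ < (c.n:ℤ)*c.M + c.K) :
    MatchesL (c.a:ℤ) (c.b:ℤ) d c.Q (word01 ((c.P:ℚ)/(c.Q:ℚ)) c.Q) := by
  have hseg := segP (c.a:ℤ) (c.b:ℤ) (c.P:ℤ) (c.Q:ℤ) (c.T:ℤ) (c.M:ℤ) d ρ e ((c.n:ℤ)*c.M + c.K)
    (by exact_mod_cast c.hb) (by exact_mod_cast c.hQ) (by exact_mod_cast c.hT1)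
    (by exact_mod_cast c.hTQ) (by exact_mod_cast c.hP1) (by exact_mod_cast c.hPQ)
    c.hPT c.hM (by exact_mod_cast c.hM1) c.hTM (by exact_mod_cast c.hab)
    he h1 h2 c.hWQ c.hWa
  rw [MatchesL, word01]
  apply List.map_congr_left
  intro i hi
  have hiQ : i < c.Q := List.mem_range.mp hi
  have s1 := hseg ((i:ℤ)+1) (by omega) (by omega)
  have s2 := hseg ((i:ℤ)+2) (by omega) (by omega)
  rw [alpha01, alphaZ]
  have g1 : (((i+1 : ℕ):ℚ) + 1) * ((c.P:ℚ)/(c.Q:ℚ)) = ((((i:ℤ)+2)*(c.P:ℤ) : ℤ):ℚ)/((c.Q:ℤ):ℚ) := by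
    push_cast; ring
  have g2 : ((i+1 : ℕ):ℚ) * ((c.P:ℚ)/(c.Q:ℚ)) = ((((i:ℤ)+1)*(c.P:ℤ) : ℤ):ℚ)/((c.Q:ℤ):ℚ) := by
    push_cast; ring
  rw [g1, g2, show (d + (i:ℤ) + 1 + 1) = d + ((i:ℤ)+2) by ring,
      show (d + (i:ℤ) + 1) = d + ((i:ℤ)+1) by ring, s1, s2]
  ring

end Ctx

lemma wpow_zero (w : List ℤ) : wpow w 0 = [] := rfl

lemma wpow_succ (w : List ℤ) (k : ℕ) : wpow w (k+1) = w ++ wpow w k := by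
  simp [wpow, List.replicate_succ]

lemma wpow_rot (X Y : List ℤ) (k : ℕ) :
    wpow (X ++ Y) k ++ X = X ++ wpow (Y ++ X) k := by
  induction k with
  | zero => simp [wpow_zero]
  | succ k ih =>
    rw [wpow_succ, wpow_succ, List.append_assoc, ih]
    simp [List.append_assoc]

lemma blk_eq (wP wS : List ℤ) (n μ : ℕ) (hn : 1 ≤ n) :
    Blk wP wS n μ = wP ++ wpow (wpow wP (n-1) ++ wS) μ := by
  cases μ with
  | zero => simp [Blk, wpow_zero]
  | succ μ' =>
    rw [Blk]
    simp only [Nat.succ_ne_zero, if_false, Nat.add_sub_cancel]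
    obtain ⟨k, rfl⟩ : ∃ k, n = k + 1 := ⟨n - 1, by omega⟩
    simp only [Nat.add_sub_cancel]
    rw [wpow_succ (wpow wP k ++ wS) μ', wpow_succ wP k]
    rw [List.append_assoc, wpow_rot wS (wpow wP k) μ']
    simp [List.append_assoc]

namespace Ctx

variable (c : Ctx)

lemma matchesS (d ρ e : ℤ) (he : (c.b:ℤ)*e = d*(c.a:ℤ) + ρ)
    (h0 : 0 ≤ ρ) (hhi : ρ ≤ (c.M:ℤ) - 1) :
    MatchesL (c.a:ℤ) (c.b:ℤ) d c.T (word01 ((c.S:ℚ)/(c.T:ℚ)) c.T) := by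
  have hT0 : (0:ℤ) < c.T := by exact_mod_cast c.hT1
  have hseg := segS (c.a:ℤ) (c.b:ℤ) (c.S:ℤ) (c.T:ℤ) (c.B:ℤ) (c.N:ℤ) d ρ e
    (by exact_mod_cast c.hb) (by exact_mod_cast c.hT1) (by exact_mod_cast c.hB1)
    (by exact_mod_cast c.hS1) (by exact_mod_cast c.hST)
    c.hSB c.hN (by exact_mod_cast c.hN1) (by exact_mod_cast c.hab)
    he h0 (by linarith [c.hSw1]) (by nlinarith [c.hSw2]) (by linarith [c.hSw3])
  rw [MatchesL, word01]
  apply List.map_congr_left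
  intro i hi
  have hiT : i < c.T := List.mem_range.mp hi
  have s1 := hseg ((i:ℤ)+1) (by omega) (by omega)
  have s2 := hseg ((i:ℤ)+2) (by omega) (by omega)
  rw [alpha01, alphaZ]
  have g1 : (((i+1 : ℕ):ℚ) + 1) * ((c.S:ℚ)/(c.T:ℚ)) = ((((i:ℤ)+2)*(c.S:ℤ) : ℤ):ℚ)/((c.T:ℤ):ℚ) := by
    push_cast; ring
  have g2 : ((i+1 : ℕ):ℚ) * ((c.S:ℚ)/(c.T:ℚ)) = ((((i:ℤ)+1)*(c.S:ℤ) : ℤ):ℚ)/((c.T:ℤ):ℚ) := by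
    push_cast; ring
  rw [g1, g2, show (d + (i:ℤ) + 1 + 1) = d + ((i:ℤ)+2) by ring,
      show (d + (i:ℤ) + 1) = d + ((i:ℤ)+1) by ring, s1, s2]
  ring

lemma matchesPpow : ∀ (r : ℕ) (d ρ e : ℤ), (c.b:ℤ)*e = d*(c.a:ℤ) + ρ →
    (r:ℤ)*(c.M:ℤ) ≤ ρ → ρ < (c.n:ℤ)*c.M + c.K →
    MatchesL (c.a:ℤ) (c.b:ℤ) d (r*c.Q) (wpow (word01 ((c.P:ℚ)/(c.Q:ℚ)) c.Q) r) := by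
  intro r
  induction r with
  | zero => intro d ρ e _ _ _; rw [Nat.zero_mul, wpow_zero]; exact matchesL_nil _ _ _
  | succ r ih =>
    intro d ρ e he hlo hhi
    have hM1 : (1:ℤ) ≤ (c.M:ℤ) := by exact_mod_cast c.hM1
    have hrM : (0:ℤ) ≤ (r:ℤ)*(c.M:ℤ) := by positivity
    rw [wpow_succ, show (r+1)*c.Q = c.Q + r*c.Q by ring]
    apply matchesL_append
    · exact c.matchesP d ρ e he (by push_cast at hlo ⊢; nlinarith) hhi
    · apply ih (d + (c.Q:ℤ)) (ρ - c.M) (e + c.P)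
      · linear_combination he - c.hM
      · push_cast at hlo ⊢; linarith
      · linarith

lemma matchesC (d ρ e : ℤ) (he : (c.b:ℤ)*e = d*(c.a:ℤ) + ρ)
    (hS0 : 0 ≤ ρ - ((c.n:ℤ)-1)*c.M) (hS1 : ρ - ((c.n:ℤ)-1)*c.M ≤ (c.M:ℤ) - 1)
    (hW : ρ < (c.n:ℤ)*c.M + c.K) :
    MatchesL (c.a:ℤ) (c.b:ℤ) d c.Tn
      (wpow (word01 ((c.P:ℚ)/(c.Q:ℚ)) c.Q) (c.n-1) ++ word01 ((c.S:ℚ)/(c.T:ℚ)) c.T) := by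
  have hcast : ((c.n - 1 : ℕ):ℤ) = (c.n:ℤ) - 1 := by
    have := c.hn1; push_cast [this]; omega
  rw [show c.Tn = (c.n-1)*c.Q + c.T from c.hTnN]
  apply matchesL_append
  · apply c.matchesPpow (c.n-1) d ρ e he (by rw [hcast]; linarith) hW
  · apply c.matchesS (d + ((c.n-1)*c.Q : ℕ)) (ρ - ((c.n:ℤ)-1)*c.M) (e + ((c.n:ℤ)-1)*c.P)
      _ hS0 hS1
    push_cast [hcast]
    linear_combination he - ((c.n:ℤ)-1)*c.hM

lemma matchesCpow : ∀ (μ : ℕ) (d ρ e : ℤ), (c.b:ℤ)*e = d*(c.a:ℤ) + ρ →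
    ((c.n:ℤ)-1)*c.M ≤ ρ →
    (1 ≤ μ → ρ + ((μ:ℤ)-1)*c.K ≤ ((c.n:ℤ)-1)*c.M + c.M - 1) →
    MatchesL (c.a:ℤ) (c.b:ℤ) d (μ*c.Tn)
      (wpow (wpow (word01 ((c.P:ℚ)/(c.Q:ℚ)) c.Q) (c.n-1) ++ word01 ((c.S:ℚ)/(c.T:ℚ)) c.T) μ) := by
  intro μ
  induction μ with
  | zero => intro d ρ e _ _ _; rw [Nat.zero_mul, wpow_zero]; exact matchesL_nil _ _ _
  | succ μ ih =>
    intro d ρ e he hlo hhi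
    have hK2 : (2:ℤ) ≤ (c.K:ℤ) := by exact_mod_cast c.hK2
    have hμK : (0:ℤ) ≤ (μ:ℤ)*(c.K:ℤ) := by positivity
    have hhi' := hhi (by omega)
    have hhi'' : ρ + (μ:ℤ)*c.K ≤ ((c.n:ℤ)-1)*c.M + c.M - 1 := by push_cast at hhi'; linarith
    rw [wpow_succ, show (μ+1)*c.Tn = c.Tn + μ*c.Tn by ring]
    apply matchesL_append
    · exact c.matchesC d ρ e he (by linarith) (by linarith) (by linarith)
    · apply ih (d + (c.Tn:ℤ)) (ρ + c.K) (e + c.Sn)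
      · linear_combination he + c.hK
      · linarith
      · intro hμ1
        push_cast
        linarith

lemma matchesBlk (μ : ℕ) (d ρ e : ℤ) (he : (c.b:ℤ)*e = d*(c.a:ℤ) + ρ)
    (hlo : (c.n:ℤ)*c.M ≤ ρ) (hhi : ρ < (c.n:ℤ)*c.M + c.K)
    (hsharp : 1 ≤ μ → ρ - (c.n:ℤ)*c.M + ((μ:ℤ)-1)*c.K ≤ (c.M:ℤ) - 1) :
    MatchesL (c.a:ℤ) (c.b:ℤ) d (c.Q + μ*c.Tn)
      (Blk (word01 ((c.P:ℚ)/(c.Q:ℚ)) c.Q) (word01 ((c.S:ℚ)/(c.T:ℚ)) c.T) c.n μ) := by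
  rw [blk_eq _ _ _ _ c.hn1]
  have hM1 : (1:ℤ) ≤ (c.M:ℤ) := by exact_mod_cast c.hM1
  have hn1 : (1:ℤ) ≤ (c.n:ℤ) := by exact_mod_cast c.hn1
  apply matchesL_append
  · exact c.matchesP d ρ e he (by nlinarith) hhi
  · apply c.matchesCpow μ (d + (c.Q:ℤ)) (ρ - c.M) (e + c.P)
    · linear_combination he - c.hM
    · linarith
    · intro hμ1
      have := hsharp hμ1
      linarith

end Ctx


set_option maxHeartbeats 2000000 in
/-- with `A/B < S/T` Farey neighbors, `P/Q` their mediant, `n ≥ 1`,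
`S_n/T_n = ((n-1)P+S)/((n-1)Q+T)`, `P_m/Q_m = (P+mS_n)/(Q+mT_n)`, and `a/b` a reduced
fraction with `P_m/Q_m < a/b < P_{m+1}/Q_{m+1}`, there exist `k ≥ 2` and
`m_1 = m+1, m_2, …, m_{k-1} ∈ {m, m+1}, m_k = m` such that the 01-digit sequence of
`BL(P/Q, a/b, n)` is purely periodic with period word `B_{n,m_1}⋯B_{n,m_k}`. -/
theorem broken_line_block_decomposition
    (A B S T P Q Sn Tn n m a b : ℕ)
    (hB : 0 < B) (hT : 0 < T) (hST1 : S ≤ T)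
    (hFarey : B * S = A * T + 1)
    (hn : 1 ≤ n)
    (hP : P = A + S) (hQ : Q = B + T)
    (hSn : Sn = (n - 1) * P + S) (hTn : Tn = (n - 1) * Q + T)
    (hb : 0 < b) (hab : Nat.Coprime a b)
    (h1 : ((P + m * Sn : ℕ) : ℚ) / ((Q + m * Tn : ℕ) : ℚ) < (a : ℚ) / b)
    (h2 : (a : ℚ) / b < ((P + (m + 1) * Sn : ℕ) : ℚ) / ((Q + (m + 1) * Tn : ℕ) : ℚ)) :
    ∃ (k : ℕ) (ms : ℕ → ℕ), 2 ≤ k ∧ ms 1 = m + 1 ∧ ms k = m ∧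
      (∀ i, 1 ≤ i → i ≤ k → ms i = m ∨ ms i = m + 1) ∧
      (∀ j : ℕ, 1 ≤ j →
        gammaBL ((P : ℚ) / Q) ((a : ℚ) / b) (n * Q) j =
          (((List.range k).map fun i =>
            Blk (word01 ((P : ℚ) / Q) Q) (word01 ((S : ℚ) / T) T) n (ms (i + 1))).flatten).getD
            ((j - 1) %
              (((List.range k).map fun i =>
                Blk (word01 ((P : ℚ) / Q) Q) (word01 ((S : ℚ) / T) T) n
                  (ms (i + 1))).flatten).length) 0) := by

  classical
  -- ===== basic naturals =====
  have hS1 : 1 ≤ S := by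
    rcases Nat.eq_zero_or_pos S with h | h
    · subst h; simp at hFarey
    · exact h
  have hAB : A < B := by
    have h1 : A*T < B*S := by omega
    have h2 : B*S ≤ B*T := Nat.mul_le_mul_left B hST1
    have h3 : A*T < B*T := by omega
    exact lt_of_mul_lt_mul_right h3 (Nat.zero_le T)
  have hP1 : 1 ≤ P := by omega
  have hPQ : P < Q := by omega
  have hQ2 : 2 ≤ Q := by omega
  have hTQ : T < Q := by omega
  -- ===== integer casts =====
  have hFareyZ : (B:ℤ)*S = (A:ℤ)*T + 1 := by exact_mod_cast hFarey
  have hPZ : (P:ℤ) = (A:ℤ) + S := by exact_mod_cast hP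
  have hQZ : (Q:ℤ) = (B:ℤ) + T := by exact_mod_cast hQ
  have hSnZ : (Sn:ℤ) = ((n:ℤ)-1)*P + S := by
    rw [hSn]; push_cast [Nat.cast_sub hn]; ring
  have hTnZ : (Tn:ℤ) = ((n:ℤ)-1)*Q + T := by
    rw [hTn]; push_cast [Nat.cast_sub hn]; ring
  have hPT : (Q:ℤ) ∣ (P:ℤ)*T + 1 := ⟨S, by rw [hPZ, hQZ]; linear_combination -hFareyZ⟩
  have hSB : (T:ℤ) ∣ (S:ℤ)*B - 1 := ⟨A, by linear_combination hFareyZ⟩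
  have hkey1 : (Q:ℤ)*Sn - (P:ℤ)*Tn = 1 := by
    rw [hSnZ, hTnZ, hPZ, hQZ]; linear_combination hFareyZ
  have hnZ : (1:ℤ) ≤ n := by exact_mod_cast hn
  have hmZ : (0:ℤ) ≤ m := by positivity
  -- ===== from h1 and h2 =====
  have hbQ' : (0:ℚ) < ((Q + m*Tn : ℕ):ℚ) := by
    have : 0 < Q + m*Tn := by omega
    exact_mod_cast this
  have hbQ2' : (0:ℚ) < ((Q + (m+1)*Tn : ℕ):ℚ) := by
    have : 0 < Q + (m+1)*Tn := by omega
    exact_mod_cast this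
  have hbb' : (0:ℚ) < (b:ℚ) := by exact_mod_cast hb
  have hy1 : ((P + m*Sn : ℕ):ℤ)*b + 1 ≤ (a:ℤ)*((Q + m*Tn : ℕ):ℤ) := by
    have h := (div_lt_div_iff₀ hbQ' hbb').mp h1
    have h' : ((P + m*Sn : ℕ):ℤ)*b < (a:ℤ)*((Q + m*Tn : ℕ):ℤ) := by exact_mod_cast h
    omega
  have hx1 : (a:ℤ)*((Q + (m+1)*Tn : ℕ):ℤ) + 1 ≤ ((P + (m+1)*Sn : ℕ):ℤ)*b := by
    have h := (div_lt_div_iff₀ hbb' hbQ2').mp h2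
    have h' : (a:ℤ)*((Q + (m+1)*Tn : ℕ):ℤ) < ((P + (m+1)*Sn : ℕ):ℤ)*b := by exact_mod_cast h
    omega
  set KZ : ℤ := (b:ℤ)*Sn - (a:ℤ)*Tn with hKZdef
  set MZ : ℤ := (a:ℤ)*Q - (b:ℤ)*P with hMZdef
  have hyZ1 : 1 ≤ MZ - (m:ℤ)*KZ := by
    have h' : ((P:ℤ) + m*Sn)*b + 1 ≤ (a:ℤ)*((Q:ℤ) + m*Tn) := by push_cast at hy1 ⊢; linarith
    rw [hMZdef, hKZdef]; linarith [h']
  have hxZ1 : 1 ≤ ((m:ℤ)+1)*KZ - MZ := by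
    have h' : (a:ℤ)*((Q:ℤ) + (m+1)*Tn) + 1 ≤ ((P:ℤ) + (m+1)*Sn)*b := by push_cast at hx1 ⊢; linarith
    rw [hMZdef, hKZdef]; linarith [h']
  have hKZ2 : 2 ≤ KZ := by linarith
  have hmKZ : 0 ≤ (m:ℤ)*KZ := mul_nonneg hmZ (by linarith)
  have hMZ1 : 1 ≤ MZ := by linarith
  set NZ : ℤ := KZ + ((n:ℤ)-1)*MZ with hNZdef
  have hnM0 : 0 ≤ ((n:ℤ)-1)*MZ := mul_nonneg (by linarith) (by linarith)
  have hNZ1 : 1 ≤ NZ := by rw [hNZdef]; linarith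
  have hMK : (a:ℤ)*Q = (b:ℤ)*P + MZ := by rw [hMZdef]; ring
  have hKK : (b:ℤ)*Sn = (a:ℤ)*Tn + KZ := by rw [hKZdef]; ring
  have hNK : (b:ℤ)*S = (a:ℤ)*T + NZ := by
    rw [hNZdef, hMZdef, hKZdef]
    linear_combination -(b:ℤ)*hSnZ + (a:ℤ)*hTnZ
  have hbKQ : (b:ℤ) = KZ*Q + MZ*Tn := by
    rw [hMZdef, hKZdef]; linear_combination -(b:ℤ)*hkey1
  have haKP : (a:ℤ) = KZ*P + MZ*Sn := by
    rw [hMZdef, hKZdef]; linear_combination -(a:ℤ)*hkey1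
  -- ===== inequality pack =====
  have hQZ2 : (2:ℤ) ≤ (Q:ℤ) := by exact_mod_cast hQ2
  have hTZ1 : (1:ℤ) ≤ (T:ℤ) := by exact_mod_cast hT
  have hSZ1 : (1:ℤ) ≤ (S:ℤ) := by exact_mod_cast hS1
  have hBZ1 : (1:ℤ) ≤ (B:ℤ) := by exact_mod_cast hB
  have hPZ1 : (1:ℤ) ≤ (P:ℤ) := by exact_mod_cast hP1
  have hPQZ : (P:ℤ) < Q := by exact_mod_cast hPQ
  have hTQZ : (T:ℤ) < Q := by exact_mod_cast hTQ
  have hSTZ : (S:ℤ) ≤ T := by exact_mod_cast hST1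
  have hnQ0 : (0:ℤ) ≤ ((n:ℤ)-1)*Q := mul_nonneg (by linarith) (by linarith)
  have hTnZ1 : (1:ℤ) ≤ (Tn:ℤ) := by
    rw [hTnZ]; linarith
  have hSnTn : (Sn:ℤ) ≤ Tn := by
    have q : (0:ℤ) ≤ ((n:ℤ)-1)*((Q:ℤ)-P) := mul_nonneg (by linarith) (by linarith)
    have e : (Tn:ℤ) - Sn = ((n:ℤ)-1)*((Q:ℤ)-P) + ((T:ℤ)-S) := by
      rw [hSnZ, hTnZ]; ring
    linarith
  have hKQpos : 0 < KZ*(Q:ℤ) := mul_pos (by linarith) (by linarith)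
  have habZ : (a:ℤ) ≤ b := by
    have e : (b:ℤ) - a = KZ*((Q:ℤ)-P) + MZ*((Tn:ℤ)-Sn) := by
      linear_combination hbKQ - haKP
    have q1 : 0 ≤ KZ*((Q:ℤ)-P) := mul_nonneg (by linarith) (by linarith)
    have q2 : 0 ≤ MZ*((Tn:ℤ)-Sn) := mul_nonneg (by linarith) (by linarith)
    linarith
  have hTMb : (T:ℤ)*MZ < b := by
    have e : (b:ℤ) - T*MZ = KZ*Q + MZ*(((n:ℤ)-1)*Q) := by
      linear_combination hbKQ + MZ*hTnZ
    have q1 : 0 ≤ MZ*(((n:ℤ)-1)*Q) := mul_nonneg (by linarith)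
      (mul_nonneg (by linarith) (by linarith))
    linarith
  have hTnnZ : (n:ℤ) ≤ Tn := by
    have q : (0:ℤ) ≤ ((n:ℤ)-1)*((Q:ℤ)-1) := mul_nonneg (by linarith) (by linarith)
    have e : (Tn:ℤ) - n = ((n:ℤ)-1)*((Q:ℤ)-1) + ((T:ℤ)-1) := by rw [hTnZ]; ring
    linarith
  have hbnM : (n:ℤ)*MZ < b := by
    have e : (b:ℤ) - n*MZ = KZ*Q + MZ*((Tn:ℤ)-n) := by
      linear_combination hbKQ
    have q1 : 0 ≤ MZ*((Tn:ℤ)-n) := mul_nonneg (by linarith) (by linarith)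
    linarith
  have hbTnM : (Tn:ℤ)*MZ < b := by
    have e : (b:ℤ) - Tn*MZ = KZ*Q := by linear_combination hbKQ
    linarith
  have hWQe : ((n:ℤ)*MZ + KZ)*Q ≤ (b:ℤ) + MZ*((Q:ℤ) - T) := by
    have e : (b:ℤ) + MZ*((Q:ℤ) - T) - ((n:ℤ)*MZ + KZ)*Q = 0 := by
      linear_combination hbKQ + MZ*hTnZ
    linarith
  have hSnn : (Sn:ℤ) - n + 1 = ((n:ℤ)-1)*((P:ℤ)-1) + S := by
    rw [hSnZ]; ring
  have hWa : (n:ℤ)*MZ + KZ ≤ (a:ℤ) + MZ := by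
    have e : (a:ℤ) + MZ - ((n:ℤ)*MZ + KZ) = KZ*((P:ℤ)-1) + MZ*(((n:ℤ)-1)*((P:ℤ)-1) + (S:ℤ) - 1) + MZ := by
      linear_combination haKP + MZ*hSnn
    have q1 : 0 ≤ KZ*((P:ℤ)-1) := mul_nonneg (by linarith) (by linarith)
    have q0 : (0:ℤ) ≤ ((n:ℤ)-1)*((P:ℤ)-1) := mul_nonneg (by linarith) (by linarith)
    have q2 : 0 ≤ MZ*(((n:ℤ)-1)*((P:ℤ)-1) + (S:ℤ) - 1) := mul_nonneg (by linarith)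
      (by linarith)
    linarith
  have hSw1 : MZ + NZ ≤ b := by
    have e : (b:ℤ) - MZ - NZ = KZ*((Q:ℤ)-1) + MZ*((Tn:ℤ)-n) := by
      rw [hNZdef]; linear_combination hbKQ
    have q1 : 0 ≤ KZ*((Q:ℤ)-1) := mul_nonneg (by linarith) (by linarith)
    have q2 : 0 ≤ MZ*((Tn:ℤ)-n) := mul_nonneg (by linarith) (by linarith)
    linarith
  have hSw2 : (MZ-1)*T + (B:ℤ)*NZ < b := by
    have e : (b:ℤ) - MZ*T - B*NZ = T*NZ := by
      rw [hNZdef]; linear_combination hbKQ + MZ*hTnZ + (KZ + ((n:ℤ)-1)*MZ)*hQZ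
    have q1 : 0 ≤ (T:ℤ)*NZ := mul_nonneg (by linarith) (by linarith)
    linarith
  have hSw3 : MZ - 1 < (a:ℤ) - NZ := by
    have e : (a:ℤ) - NZ - MZ = KZ*((P:ℤ)-1) + MZ*(((n:ℤ)-1)*((P:ℤ)-1) + (S:ℤ) - 1) - KZ + KZ := by
      rw [hNZdef]; linear_combination haKP + MZ*hSnn
    have q1 : 0 ≤ KZ*((P:ℤ)-1) := mul_nonneg (by linarith) (by linarith)
    have q0 : (0:ℤ) ≤ ((n:ℤ)-1)*((P:ℤ)-1) := mul_nonneg (by linarith) (by linarith)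
    have q2 : 0 ≤ MZ*(((n:ℤ)-1)*((P:ℤ)-1) + (S:ℤ) - 1) := mul_nonneg (by linarith)
      (by linarith)
    linarith
  -- ===== natural versions =====
  set MN : ℕ := MZ.toNat with hMNdef
  set KN : ℕ := KZ.toNat with hKNdef
  set NN : ℕ := NZ.toNat with hNNdef
  set yN : ℕ := (MZ - (m:ℤ)*KZ).toNat with hyNdef
  have hMN : (MN:ℤ) = MZ := Int.toNat_of_nonneg (by linarith)
  have hKN : (KN:ℤ) = KZ := Int.toNat_of_nonneg (by linarith)
  have hNN : (NN:ℤ) = NZ := Int.toNat_of_nonneg (by linarith)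
  have hyN : (yN:ℤ) = MZ - (m:ℤ)*KZ := Int.toNat_of_nonneg (by linarith)
  have hyN1 : 1 ≤ yN := by
    have : (1:ℤ) ≤ (yN:ℤ) := by rw [hyN]; linarith
    exact_mod_cast this
  have hKN1 : 1 ≤ KN := by
    have : (1:ℤ) ≤ (KN:ℤ) := by rw [hKN]; linarith
    exact_mod_cast this
  have hKN2 : 2 ≤ KN := by
    have : (2:ℤ) ≤ (KN:ℤ) := by rw [hKN]; linarith
    exact_mod_cast this
  have hyKN : yN + 1 ≤ KN := by
    have q : (0:ℤ) ≤ (m:ℤ)*KZ + ((m:ℤ)+1)*KZ - MZ - (m:ℤ)*KZ := by linarith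
    have : (yN:ℤ) + 1 ≤ (KN:ℤ) := by rw [hyN, hKN]; linarith
    exact_mod_cast this
  have hyM : MZ = (yN:ℤ) + (m:ℤ)*KN := by rw [hyN, hKN]; ring
  -- ===== context =====
  obtain ⟨c, e_a, e_b, e_P, e_Q, e_S, e_T, e_n, e_Tn, e_M, e_K⟩ :
      ∃ c : Ctx, c.a = a ∧ c.b = b ∧ c.P = P ∧ c.Q = Q ∧ c.S = S ∧ c.T = T ∧
        c.n = n ∧ c.Tn = Tn ∧ c.M = MN ∧ c.K = KN := by
    refine ⟨{
      a := a, b := b, P := P, Q := Q, S := S, T := T, B := B,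
      M := MN, K := KN, N := NN, Sn := Sn, Tn := Tn, n := n,
      hb := hb, hQ := hQ2, hT1 := hT, hTQ := hTQ, hP1 := hP1, hPQ := hPQ,
      hS1 := hS1, hST := hST1, hB1 := hB,
      hPT := hPT, hSB := hSB,
      hM := by rw [hMN]; exact hMK,
      hM1 := by
        have h9 : (1:ℤ) ≤ (MN:ℤ) := by rw [hMN]; linarith
        exact_mod_cast h9,
      hN := by rw [hNN]; exact hNK,
      hN1 := by
        have h9 : (1:ℤ) ≤ (NN:ℤ) := by rw [hNN]; linarith
        exact_mod_cast h9,
      hK := by rw [hKN]; exact hKK,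
      hK2 := hKN2,
      hn1 := hn,
      hTnN := hTn,
      hab := by exact_mod_cast habZ,
      hTM := by rw [hMN]; exact hTMb,
      hWQ := by rw [hMN, hKN]; exact hWQe,
      hWa := by rw [hMN, hKN]; exact hWa,
      hSw1 := by rw [hMN, hNN]; exact hSw1,
      hSw2 := by rw [hMN, hNN]; exact hSw2,
      hSw3 := by rw [hMN, hNN]; exact hSw3,
      hQP1 := by linarith }, rfl, rfl, rfl, rfl, rfl, rfl, rfl, rfl, rfl, rfl⟩
  -- ===== offsets =====
  have hnQb : n*Q < b := by
    have q1 : (0:ℤ) ≤ (KZ-2)*Q := mul_nonneg (by linarith) (by linarith)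
    have q2 : (0:ℤ) ≤ (MZ-1)*Tn := mul_nonneg (by linarith) (by linarith)
    have e3 : MZ*(Tn:ℤ) = (MZ-1)*Tn + Tn := by ring
    have e4 : KZ*(Q:ℤ) = (KZ-2)*Q + 2*Q := by ring
    have h9 : (n:ℤ)*Q < (b:ℤ) := by linarith [hbKQ, hTnZ]
    exact_mod_cast by push_cast; linarith [h9]
  set cn : ℕ := b - n*Q with hcndef
  have hcnZ : (cn:ℤ) = (b:ℤ) - (n:ℤ)*Q := by
    rw [hcndef]
    push_cast [Nat.cast_sub (le_of_lt hnQb)]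
    ring
  set ms : ℕ → ℕ := fun i => m + (ceilN yN KN i - ceilN yN KN (i-1)) with hmsdef
  set D : ℕ → ℕ := fun i => i*Q + (i*m + ceilN yN KN i)*Tn with hDdef
  set R : ℕ → ℤ := fun i => (n:ℤ)*MZ + ((ceilN yN KN i : ℤ)*KN - (i:ℤ)*yN) with hRdef
  -- ===== main induction =====
  have aux : ∀ i : ℕ, i ≤ KN →
      Ctx.MatchesL (a:ℤ) (b:ℤ) (cn:ℤ) (D i)
        (((List.range i).map fun j => Blk (word01 ((P:ℚ)/Q) Q) (word01 ((S:ℚ)/T) T) n (ms (j+1))).flatten)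
      ∧ ∃ e : ℤ, (b:ℤ)*e = ((cn:ℤ) + ((D i : ℕ):ℤ))*a + R i := by
    intro i
    induction i with
    | zero =>
      intro _
      have h0 : D 0 = 0 := by simp [hDdef, cf_zero yN KN hKN1]
      constructor
      · rw [h0]
        simp [Ctx.MatchesL]
      · refine ⟨(a:ℤ) - (n:ℤ)*P, ?_⟩
        rw [h0]
        simp only [hRdef, cf_zero yN KN hKN1, Nat.cast_zero, Nat.cast_ofNat]
        rw [hcnZ]
        push_cast
        linear_combination (n:ℤ)*hMK
    | succ i ih =>
      intro hi1
      obtain ⟨hMat, e, he⟩ := ih (by omega)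
      have hmono : ceilN yN KN i ≤ ceilN yN KN (i+1) := cf_mono yN KN i
      have hstep : ceilN yN KN (i+1) ≤ ceilN yN KN i + 1 := cf_step yN KN i hKN1 hyKN
      set eN : ℕ := ceilN yN KN (i+1) - ceilN yN KN i with heNdef
      have heN01 : eN = 0 ∨ eN = 1 := by omega
      have hci1 : ceilN yN KN (i+1) = ceilN yN KN i + eN := by omega
      have hmu : ms (i+1) = m + eN := by
        simp only [hmsdef, heNdef, Nat.add_sub_cancel]
      -- window facts
      have hlowZ := cf_low yN KN i hKN1
      have hhighZ := cf_high yN KN i hKN1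
      have hcomm : ((ceilN yN KN i : ℕ):ℤ)*KN = (KN:ℤ)*(ceilN yN KN i) := by ring
      have hRlo : (n:ℤ)*MZ ≤ R i := by
        simp only [hRdef]
        linarith
      have hRhi : R i < (n:ℤ)*MZ + KZ := by
        simp only [hRdef]
        rw [← hKN]
        linarith
      have hsharp : 1 ≤ ms (i+1) →
          R i - (n:ℤ)*MZ + (((ms (i+1)):ℤ)-1)*KZ ≤ MZ - 1 := by
        intro hμ1
        rw [hmu] at hμ1 ⊢
        simp only [hRdef]
        rcases heN01 with h0 | h1
        · -- eN = 0, so m ≥ 1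
          rw [h0] at hμ1 ⊢
          have hm1 : 1 ≤ m := by omega
          have e1 : (((m + 0 : ℕ)):ℤ) = (m:ℤ) := by push_cast; ring
          rw [e1]
          have q1 : ((m:ℤ)-1)*KZ = (m:ℤ)*KZ - KZ := by ring
          rw [hyM, ← hKN]
          linarith
        · rw [h1]
          have hsh := cf_sharp yN KN i hKN1 (by omega)
          have hshZ : (KN:ℤ)*(ceilN yN KN i) ≤ ((i:ℤ)+1)*yN - 1 := by
            have h9 : (KN * ceilN yN KN i : ℕ) + 1 ≤ ((i+1)*yN : ℕ) := hsh
            have h10 : ((KN * ceilN yN KN i : ℕ):ℤ) + 1 ≤ (((i+1)*yN : ℕ):ℤ) := by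
              exact_mod_cast h9
            push_cast at h10
            linarith
          have e1 : (((m + 1 : ℕ)):ℤ) = (m:ℤ) + 1 := by push_cast; ring
          rw [e1]
          rw [hyM, ← hKN]
          linarith
      -- apply the block lemma
      have he' : ((c.b):ℤ)*e = ((cn:ℤ) + ((D i : ℕ):ℤ))*(c.a) + R i := by
        rw [e_a, e_b]; exact he
      have hRlo' : ((c.n):ℤ)*(c.M) ≤ R i := by
        rw [e_n, e_M, hMN]; exact hRlo
      have hRhi' : R i < ((c.n):ℤ)*(c.M) + (c.K) := by
        rw [e_n, e_M, e_K, hMN, hKN]; exact hRhi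
      have hsharp' : 1 ≤ ms (i+1) →
          R i - ((c.n):ℤ)*(c.M) + (((ms (i+1)):ℤ)-1)*(c.K) ≤ ((c.M):ℤ) - 1 := by
        rw [e_n, e_M, e_K, hMN, hKN]; exact hsharp
      have hBlk := Ctx.matchesBlk c (ms (i+1)) ((cn:ℤ) + ((D i : ℕ):ℤ)) (R i) e
        he' hRlo' hRhi' hsharp'
      rw [e_a, e_b, e_P, e_Q, e_S, e_T, e_n, e_Tn] at hBlk
      have hDstep : D (i+1) = D i + (Q + ms (i+1) * Tn) := by
        simp only [hDdef, hmu, hci1]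
        have e1 : (i+1)*Q = i*Q + Q := by ring
        have e2 : ((i+1)*m + (ceilN yN KN i + eN))*Tn
            = (i*m + ceilN yN KN i)*Tn + (m + eN)*Tn := by ring
        omega
      have hsplit : ((List.range (i+1)).map fun j =>
            Blk (word01 ((P:ℚ)/Q) Q) (word01 ((S:ℚ)/T) T) n (ms (j+1))).flatten
          = (((List.range i).map fun j =>
              Blk (word01 ((P:ℚ)/Q) Q) (word01 ((S:ℚ)/T) T) n (ms (j+1))).flatten)
            ++ Blk (word01 ((P:ℚ)/Q) Q) (word01 ((S:ℚ)/T) T) n (ms (i+1)) := by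
        rw [List.range_succ, List.map_append, List.flatten_append]
        simp
      constructor
      · rw [hsplit, hDstep]
        exact Ctx.matchesL_append hMat hBlk
      · refine ⟨e + (P:ℤ) + ((ms (i+1)):ℤ)*Sn, ?_⟩
        have hDc : ((D (i+1) : ℕ):ℤ) = ((D i : ℕ):ℤ) + (Q:ℤ) + ((ms (i+1)):ℤ)*(Tn:ℤ) := by
          rw [hDstep]; push_cast; ring
        have hRs : R (i+1) = R i - MZ + ((ms (i+1)):ℤ)*KZ := by
          simp only [hRdef, hmu, hci1]
          rw [hyM, ← hKN]
          push_cast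
          ring
        rw [hRs, hDc]
        linear_combination he + hMK + ((ms (i+1)):ℤ)*hKK
  -- ===== final word facts =====
  have hDK : D KN = b := by
    have h9 : ((D KN : ℕ):ℤ) = (b:ℤ) := by
      simp only [hDdef, cf_K yN KN hKN1]
      push_cast
      rw [hbKQ, ← hKN]
      linear_combination (-(Tn:ℤ))*hyM
    exact_mod_cast h9
  obtain ⟨hfin, -⟩ := aux KN (le_refl KN)
  rw [hDK] at hfin
  -- ===== gammaBL reduction =====
  have hQ0Z : (0:ℤ) < (Q:ℤ) := by linarith
  have hbZ0 : (0:ℤ) < (b:ℤ) := by exact_mod_cast hb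
  have lemAinst := lemA (a:ℤ) (b:ℤ) (P:ℤ) (Q:ℤ) (T:ℤ) (n:ℤ) (Tn:ℤ) MZ
    hbZ0 hQ0Z hTZ1 hTQZ hPT (by linarith) hMK hMZ1 hTnZ hnZ hbnM hbTnM
  have hBL : ∀ j : ℕ, ⌈BLfun ((P:ℚ)/Q) ((a:ℚ)/b) (n*Q) (j:ℚ)⌉
      = ⌈((((j:ℤ) - ((n*Q:ℕ):ℤ))*(a:ℤ) : ℤ):ℚ)/(((b:ℤ)):ℚ)⌉ + (n:ℤ)*P := by
    intro j
    have hQne : ((Q:ℚ)) ≠ 0 := by positivity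
    have hbne : ((b:ℚ)) ≠ 0 := by positivity
    by_cases hj : j ≤ n*Q
    · rw [BLfun, if_pos (by exact_mod_cast hj : (j:ℚ) ≤ ((n*Q:ℕ):ℚ))]
      set i : ℤ := ((n*Q:ℕ):ℤ) - (j:ℤ) with hidef
      have hi0 : 0 ≤ i := by
        have : (j:ℤ) ≤ ((n*Q:ℕ):ℤ) := by exact_mod_cast hj
        omega
      have hi1 : i ≤ (n:ℤ)*Q := by
        have : ((n*Q:ℕ):ℤ) = (n:ℤ)*Q := by push_cast; ring
        omega
      have hfl := lemAinst i hi0 hi1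
      have c1 : (P:ℚ)/Q * (j:ℚ) = ((-(i*(P:ℤ)) : ℤ):ℚ)/(((Q:ℤ)):ℚ) + (((n*P:ℕ):ℤ):ℚ) := by
        rw [hidef]
        push_cast
        field_simp
        ring
      rw [c1, Int.ceil_add_intCast]
      have c2 : ((-(i*(P:ℤ)) : ℤ):ℚ)/(((Q:ℤ)):ℚ) = -(((i*(P:ℤ):ℤ):ℚ)/(((Q:ℤ)):ℚ)) := by
        push_cast; ring
      have c3 : ((j:ℤ) - ((n*Q:ℕ):ℤ)) = -i := by rw [hidef]; ring
      have c4 : ((-i*(a:ℤ) : ℤ):ℚ)/(((b:ℤ)):ℚ) = -(((i*(a:ℤ):ℤ):ℚ)/(((b:ℤ)):ℚ)) := by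
        push_cast; ring
      rw [c2, Int.ceil_neg, c3, c4, Int.ceil_neg, hfl]
      push_cast
      ring
    · push_neg at hj
      rw [BLfun, if_neg (by
        push_neg
        exact_mod_cast hj)]
      have c5 : (a:ℚ)/b * ((j:ℚ) - ((n*Q:ℕ):ℚ)) + (P:ℚ)/Q * ((n*Q:ℕ):ℚ)
          = ((((j:ℤ) - ((n*Q:ℕ):ℤ))*(a:ℤ) : ℤ):ℚ)/(((b:ℤ)):ℚ) + (((n*P:ℕ):ℤ):ℚ) := by
        push_cast
        field_simp
      rw [c5, Int.ceil_add_intCast]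
      push_cast
      ring
  have hGamma : ∀ j : ℕ, gammaBL ((P:ℚ)/Q) ((a:ℚ)/b) (n*Q) j
      = Ctx.alphaZ (a:ℤ) (b:ℤ) ((j:ℤ) - ((n*Q:ℕ):ℤ)) := by
    intro j
    rw [gammaBL]
    have e1 : ((j:ℚ)+1) = ((j+1:ℕ):ℚ) := by push_cast; ring
    rw [e1, hBL (j+1), hBL j]
    rw [Ctx.alphaZ]
    have e2 : ((j+1:ℕ):ℤ) - ((n*Q:ℕ):ℤ) = ((j:ℤ) - ((n*Q:ℕ):ℤ)) + 1 := by push_cast; ring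
    rw [e2]
    ring
  have hper : ∀ (z k : ℤ), Ctx.alphaZ (a:ℤ) (b:ℤ) (z + (b:ℤ)*k) = Ctx.alphaZ (a:ℤ) (b:ℤ) z := by
    intro z k
    rw [Ctx.alphaZ, Ctx.alphaZ]
    rw [show z + (b:ℤ)*k + 1 = (z+1) + (b:ℤ)*k by ring]
    rw [ceil_shift_int _ _ _ _ hbZ0, ceil_shift_int _ _ _ _ hbZ0]
    ring
  -- ===== wrap up =====
  refine ⟨KN, ms, hKN2, ?_, ?_, ?_, ?_⟩
  · simp only [hmsdef]
    rw [cf_one yN KN hKN1 hyN1 hyKN]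
    simp [cf_zero yN KN hKN1]
  · simp only [hmsdef]
    rw [cf_K yN KN hKN1, cf_last yN KN hKN1 hyN1 hyKN]
    omega
  · intro i hi1 hik
    simp only [hmsdef]
    have h1 := cf_mono yN KN (i-1)
    have h2 := cf_step yN KN (i-1) hKN1 hyKN
    have h3 : i - 1 + 1 = i := by omega
    rw [h3] at h1 h2
    omega
  · intro j hj
    rw [hGamma j, hfin]
    have hlen : ((List.range b).map fun (i:ℕ) => Ctx.alphaZ (a:ℤ) (b:ℤ) ((cn:ℤ) + (i:ℤ) + 1)).length = b := by
      simp
    rw [hlen]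
    set idx : ℕ := (j-1) % b with hidxdef
    have hidx : idx < b := Nat.mod_lt _ hb
    have hget : ((List.range b).map fun (i:ℕ) => Ctx.alphaZ (a:ℤ) (b:ℤ) ((cn:ℤ) + (i:ℤ) + 1)).getD idx 0
        = Ctx.alphaZ (a:ℤ) (b:ℤ) ((cn:ℤ) + (idx:ℤ) + 1) := by
      rw [List.getD_eq_getElem _ _ (by simpa using hidx)]
      simp
    rw [hget]
    have hidxZ : (idx:ℤ) = ((j:ℤ)-1) % (b:ℤ) := by
      rw [hidxdef]
      push_cast [Nat.cast_sub hj]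
      ring
    have hdm := Int.mul_ediv_add_emod ((j:ℤ)-1) (b:ℤ)
    have heq : (cn:ℤ) + (idx:ℤ) + 1 = ((j:ℤ) - ((n*Q:ℕ):ℤ)) + (b:ℤ)*(1 - ((j:ℤ)-1)/b) := by
      rw [hcnZ, hidxZ]
      push_cast
      linear_combination hdm
    rw [heq, hper]
end

section
/- Let a/b and c/d be Farey neighbors with 0 < a/b < c/d ≤ 1, and let (α_i)_{i≥1} = (α_i(a/b)) and (β_i)_{i≥1} = (α_i(c/d)) be their 01-mechanical digit sequences. Then there exists an integer 1 ≤ r ≤ b such that α_i = β_i for all 1 ≤ i < r, α_r = 0, and β_r = 1. -/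
lemma ceil_eq_of_lt (a b c d : ℕ) (hb : 0 < b) (hd : 0 < d)
    (hFarey : b * c = a * d + 1) (j : ℕ) (hj : j < b) :
    ⌈(j : ℚ) * ((c : ℚ) / d)⌉ = ⌈(j : ℚ) * ((a : ℚ) / b)⌉ := by
  have hbQ : (0:ℚ) < b := by exact_mod_cast hb
  have hdQ : (0:ℚ) < d := by exact_mod_cast hd
  refine le_antisymm ?_ ?_
  · set k : ℤ := ⌈(j : ℚ) * ((a : ℚ) / b)⌉ with hk
    have h1 : (j : ℚ) * ((a : ℚ) / b) ≤ k := Int.le_ceil _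
    have h2 : (j : ℤ) * a ≤ k * b := by
      rw [mul_div_assoc', div_le_iff₀ hbQ] at h1
      exact_mod_cast h1
    have h3 : (j : ℤ) * c ≤ k * d := by
      by_contra h
      push_neg at h
      have h4 : k * d + 1 ≤ (j:ℤ) * c := h
      have hF : (b:ℤ) * c = a * d + 1 := by exact_mod_cast hFarey
      have hjb : (j:ℤ) < b := by exact_mod_cast hj
      have hdZ : (0:ℤ) < d := by exact_mod_cast hd
      have hbZ : (0:ℤ) < b := by exact_mod_cast hb
      nlinarith [mul_le_mul_of_nonneg_right h2 hdZ.le,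
        mul_le_mul_of_nonneg_right h4 hbZ.le]
    apply Int.ceil_le.mpr
    rw [mul_div_assoc', div_le_iff₀ hdQ]
    exact_mod_cast h3
  · apply Int.ceil_le_ceil
    apply mul_le_mul_of_nonneg_left _ (by positivity : (0:ℚ) ≤ (j:ℚ))
    rw [div_le_div_iff₀ hbQ hdQ]
    have : (a:ℚ) * d + 1 = b * c := by exact_mod_cast hFarey.symm
    nlinarith

/-- if `a/b < c/d` are Farey neighbors with `0 < a/b < c/d ≤ 1`, then there
is `1 ≤ r ≤ b` such that the 01-mechanical digit sequences of `a/b` and `c/d` agree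
before position `r` and at position `r` the first is `0` while the second is `1`. -/
theorem first_digit_difference
    (a b c d : ℕ) (ha : 0 < a) (hb : 0 < b) (hd : 0 < d) (hcd : c ≤ d)
    (hFarey : b * c = a * d + 1) :
    ∃ r : ℕ, 1 ≤ r ∧ r ≤ b ∧
      (∀ i : ℕ, 1 ≤ i → i < r → alpha01 ((a : ℚ) / b) i = alpha01 ((c : ℚ) / d) i) ∧
      alpha01 ((a : ℚ) / b) r = 0 ∧ alpha01 ((c : ℚ) / d) r = 1 := by
  have hab : a < b := by nlinarith
  have hb2 : 2 ≤ b := by omega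
  have hbQ : (0:ℚ) < b := by exact_mod_cast hb
  have hdQ : (0:ℚ) < d := by exact_mod_cast hd
  have haQ : (0:ℚ) < a := by exact_mod_cast ha
  have habQ : (a:ℚ) < b := by exact_mod_cast hab
  have hcast : ((b - 1 : ℕ) : ℚ) = (b:ℚ) - 1 := by
    push_cast [Nat.one_le_iff_ne_zero.mpr (by omega : b ≠ 0)]
    ring
  have e1 : (b:ℚ) * ((a:ℚ)/b) = (a:ℚ) := by field_simp
  have hx : ((b:ℚ) - 1) * ((a:ℚ)/b) = (a:ℚ) - (a:ℚ)/b := by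
    field_simp
  have h01 : 0 < (a:ℚ)/b := by positivity
  have h11 : (a:ℚ)/b < 1 := (div_lt_one hbQ).mpr habQ
  have e2 : ⌈((b:ℚ) - 1) * ((a:ℚ)/b)⌉ = (a:ℤ) := by
    rw [Int.ceil_eq_iff]
    rw [hx]
    constructor <;> push_cast <;> linarith
  have hFQ : (b:ℚ) * c = (a:ℚ) * d + 1 := by exact_mod_cast hFarey
  have hv : (b:ℚ) * ((c:ℚ)/d) = (a:ℚ) + 1/d := by
    field_simp
    linarith
  have hd1 : (1:ℚ)/d ≤ 1 := by
    rw [div_le_one hdQ]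
    exact_mod_cast hd
  have eC1 : ⌈(b:ℚ) * ((c:ℚ)/d)⌉ = (a:ℤ) + 1 := by
    rw [Int.ceil_eq_iff, hv]
    constructor <;> push_cast
    · have : (0:ℚ) < 1/d := by positivity
      linarith
    · linarith
  have eC2 : ⌈((b:ℚ) - 1) * ((c:ℚ)/d)⌉ = (a:ℤ) := by
    have := ceil_eq_of_lt a b c d hb hd hFarey (b-1) (by omega)
    rw [hcast] at this
    rw [this, e2]
  refine ⟨b - 1, by omega, by omega, ?_, ?_, ?_⟩
  · intro i h1 h2
    have k1 := ceil_eq_of_lt a b c d hb hd hFarey i (by omega)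
    have k2 := ceil_eq_of_lt a b c d hb hd hFarey (i+1) (by omega)
    push_cast at k2
    simp only [alpha01]
    rw [k1, k2]
  · simp only [alpha01, hcast, sub_add_cancel]
    rw [e1, e2, Int.ceil_natCast, sub_self]
  · simp only [alpha01, hcast, sub_add_cancel]
    rw [eC1, eC2]
    ring
end
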